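/- arXiv:1308.5754 — 13 statements merged into one kernel-verified Lean document; each statement's English description precedes it below -/
import Mathlib

section
/- Let A = (1, a_y, a_z) and B = (b_x, 1, b_z) be points of X, and let α = max{2 − a_y − b_x, |a_z − b_z|}, β = max{2 − a_z − b_x, 2 − a_y − b_z}, γ = max{2 + a_z − b_x, 2 − a_y + b_z}. Then α = min{α, β, γ} if and only if at least one of the following four conditions holds: (1) |a_z| ≤ a_y; (2) |b_z| ≤ b_x; (3) |a_y| ≤ a_z and |b_x| ≤ −b_z; (4) |a_y| ≤ −a_z and |b_x| ≤ b_z. -/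
theorem statement1 (ay az bx bz α β γ : ℝ)
    (hay : ay ∈ Set.Icc (-1:ℝ) 1) (haz : az ∈ Set.Icc (-1:ℝ) 1)
    (hbx : bx ∈ Set.Icc (-1:ℝ) 1) (hbz : bz ∈ Set.Icc (-1:ℝ) 1)
    (hα : α = max (2 - ay - bx) |az - bz|)
    (hβ : β = max (2 - az - bx) (2 - ay - bz))
    (hγ : γ = max (2 + az - bx) (2 - ay + bz)) :
    α = min α (min β γ) ↔
      (|az| ≤ ay ∨ |bz| ≤ bx ∨ (|ay| ≤ az ∧ |bx| ≤ -bz) ∨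
        (|ay| ≤ -az ∧ |bx| ≤ bz)) := by
  obtain ⟨hay1, hay2⟩ := hay
  obtain ⟨haz1, haz2⟩ := haz
  obtain ⟨hbx1, hbx2⟩ := hbx
  obtain ⟨hbz1, hbz2⟩ := hbz
  subst hα hβ hγ
  have habβ : |az - bz| ≤ max (2 - az - bx) (2 - ay - bz) := by
    rw [abs_sub_le_iff]
    constructor
    · exact le_max_of_le_right (by linarith)
    · exact le_max_of_le_left (by linarith)
  have habγ : |az - bz| ≤ max (2 + az - bx) (2 - ay + bz) := by
    rw [abs_sub_le_iff]
    constructor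
    · exact le_max_of_le_left (by linarith)
    · exact le_max_of_le_right (by linarith)
  rw [eq_comm, min_eq_left_iff, le_min_iff, max_le_iff, max_le_iff]
  simp only [habβ, habγ, and_true, le_max_iff, abs_le]
  constructor
  · rintro ⟨h1 | h1, h2 | h2⟩
    · exact Or.inl ⟨by linarith, by linarith⟩
    · -- az ≤ ay (from h1), -bz ≤ bx (from h2)
      rcases le_total (-az) ay with h | h
      · exact Or.inl ⟨by linarith, by linarith⟩
      · rcases le_total bz bx with h' | h'
        · exact Or.inr (Or.inl ⟨by linarith, by linarith⟩)
        · exact Or.inr (Or.inr (Or.inr ⟨⟨by linarith, by linarith⟩,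
            ⟨by linarith, by linarith⟩⟩))
    · -- bz ≤ bx, -az ≤ ay
      rcases le_total (-bz) bx with h | h
      · exact Or.inr (Or.inl ⟨by linarith, by linarith⟩)
      · rcases le_total az ay with h' | h'
        · exact Or.inl ⟨by linarith, by linarith⟩
        · exact Or.inr (Or.inr (Or.inl ⟨⟨by linarith, by linarith⟩,
            ⟨by linarith, by linarith⟩⟩))
    · exact Or.inr (Or.inl ⟨by linarith, by linarith⟩)
  · rintro (⟨h1, h2⟩ | ⟨h1, h2⟩ | ⟨⟨h1, h2⟩, ⟨h3, h4⟩⟩ | ⟨⟨h1, h2⟩, ⟨h3, h4⟩⟩)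
    · exact ⟨Or.inl (by linarith), Or.inl (by linarith)⟩
    · exact ⟨Or.inr (by linarith), Or.inr (by linarith)⟩
    · exact ⟨Or.inr (by linarith), Or.inl (by linarith)⟩
    · exact ⟨Or.inl (by linarith), Or.inr (by linarith)⟩
end

section
/- Let A = (1, a_y, a_z) and B = (b_x, 1, b_z) be points of X, and let α = max{2 − a_y − b_x, |a_z − b_z|}, β = max{2 − a_z − b_x, 2 − a_y − b_z}, γ = max{2 + a_z − b_x, 2 − a_y + b_z}. Then β = min{α, β, γ} if and only if at least one of the following four conditions holds: (5) a_y ≤ a_z and b_x ≤ b_z and a_z ≥ 0 and b_x ≤ a_y + a_z + b_z; (6) a_y ≤ a_z and b_x ≤ b_z and b_z ≥ 0 and a_y ≤ b_x + a_z + b_z; (7) a_y = a_z = 1; (8) b_x = b_z = 1. -/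
theorem statement2 (ay az bx bz α β γ : ℝ)
    (hay : ay ∈ Set.Icc (-1:ℝ) 1) (haz : az ∈ Set.Icc (-1:ℝ) 1)
    (hbx : bx ∈ Set.Icc (-1:ℝ) 1) (hbz : bz ∈ Set.Icc (-1:ℝ) 1)
    (hα : α = max (2 - ay - bx) |az - bz|)
    (hβ : β = max (2 - az - bx) (2 - ay - bz))
    (hγ : γ = max (2 + az - bx) (2 - ay + bz)) :
    β = min α (min β γ) ↔
      ((ay ≤ az ∧ bx ≤ bz ∧ 0 ≤ az ∧ bx ≤ ay + az + bz) ∨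
        (ay ≤ az ∧ bx ≤ bz ∧ 0 ≤ bz ∧ ay ≤ bx + az + bz) ∨
        (ay = 1 ∧ az = 1) ∨ (bx = 1 ∧ bz = 1)) := by
  obtain ⟨hay1, hay2⟩ := hay
  obtain ⟨haz1, haz2⟩ := haz
  obtain ⟨hbx1, hbx2⟩ := hbx
  obtain ⟨hbz1, hbz2⟩ := hbz
  have key : β = min α (min β γ) ↔ β ≤ α ∧ β ≤ γ := by
    constructor
    · intro h
      exact ⟨h ▸ min_le_left _ _, h ▸ (min_le_right _ _).trans (min_le_right _ _)⟩
    · rintro ⟨h1, h2⟩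
      rw [min_eq_left h2, min_eq_right h1]
  rw [key]
  subst hα hβ hγ
  have habs1 : az - bz ≤ |az - bz| := le_abs_self _
  have habs2 : -(az - bz) ≤ |az - bz| := neg_le_abs _
  constructor
  · rintro ⟨h1, h2⟩
    rw [max_le_iff] at h1 h2
    have F1 := le_max_iff.mp h1.1
    have F2 := le_max_iff.mp h1.2
    have F3 := le_max_iff.mp h2.1
    have F4 := le_max_iff.mp h2.2
    rcases abs_cases (az - bz) with ⟨hq, hc⟩ | ⟨hq, hc⟩
    · -- az ≥ bz
      rw [hq] at F1 F2
      rcases F2 with f2 | f2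
      · -- bx ≤ bz
        rcases F1 with f1 | f1
        · -- ay ≤ az
          rcases F3 with f3 | f3 <;> rcases F4 with f4 | f4
          · left; exact ⟨by linarith, by linarith, by linarith, by linarith⟩
          · by_cases hd : bx ≤ ay + az + bz
            · left; exact ⟨by linarith, by linarith, by linarith, hd⟩
            · right; left; exact ⟨by linarith, by linarith, by linarith, by linarith⟩
          · -- f3 : ay ≤ az+bx+bz, f4 : bx ≤ ay+az+bz ⇒ az+bz ≥ 0 ⇒ az ≥ 0
            left; exact ⟨by linarith, by linarith, by linarith, by linarith⟩
          · right; left; exact ⟨by linarith, by linarith, by linarith, by linarith⟩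
        · -- 2+bz ≤ 2az+bx, bx ≤ bz ⇒ az = 1
          left; exact ⟨by linarith, by linarith, by linarith, by linarith⟩
      · -- 2 ≤ ay+az ⇒ ay = az = 1
        right; right; left; exact ⟨by linarith, by linarith⟩
    · -- bz ≥ az
      rw [hq] at F1 F2
      rcases F1 with f1 | f1
      · -- ay ≤ az
        rcases F2 with f2 | f2
        · -- bx ≤ bz
          rcases F3 with f3 | f3 <;> rcases F4 with f4 | f4
          · left; exact ⟨by linarith, by linarith, by linarith, by linarith⟩
          · by_cases hd : bx ≤ ay + az + bz
            · left; exact ⟨by linarith, by linarith, by linarith, hd⟩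
            · right; left; exact ⟨by linarith, by linarith, by linarith, by linarith⟩
          · -- az+bz ≥ 0, bz ≥ az ⇒ bz ≥ 0
            right; left; exact ⟨by linarith, by linarith, by linarith, by linarith⟩
          · right; left; exact ⟨by linarith, by linarith, by linarith, by linarith⟩
        · -- 2+az ≤ ay+2bz, ay ≤ az ⇒ bz = 1
          right; left; exact ⟨by linarith, by linarith, by linarith, by linarith⟩
      · -- 2 ≤ bx+bz ⇒ bx = bz = 1
        right; right; right; exact ⟨by linarith, by linarith⟩
  · rintro (⟨h1, h2, h3, h4⟩ | ⟨h1, h2, h3, h4⟩ | ⟨h1, h2⟩ | ⟨h1, h2⟩) <;>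
      refine ⟨max_le ?_ ?_, max_le ?_ ?_⟩ <;> rw [le_max_iff] <;>
      first
        | (left; linarith)
        | (right; linarith)
end

section
/- Let A = (1, a_y, a_z) and B = (b_x, 1, b_z) be points of X, and let α = max{2 − a_y − b_x, |a_z − b_z|}, β = max{2 − a_z − b_x, 2 − a_y − b_z}, γ = max{2 + a_z − b_x, 2 − a_y + b_z}. Then γ = min{α, β, γ} if and only if at least one of the following four conditions holds: (9) a_y ≤ −a_z and b_x ≤ −b_z and a_z ≤ 0 and b_x ≤ a_y − a_z − b_z; (10) a_y ≤ −a_z and b_x ≤ −b_z and b_z ≤ 0 and a_y ≤ b_x − a_z − b_z; (11) a_y = −a_z = 1; (12) b_x = −b_z = 1. -/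
theorem statement3 (ay az bx bz α β γ : ℝ)
    (hay : ay ∈ Set.Icc (-1:ℝ) 1) (haz : az ∈ Set.Icc (-1:ℝ) 1)
    (hbx : bx ∈ Set.Icc (-1:ℝ) 1) (hbz : bz ∈ Set.Icc (-1:ℝ) 1)
    (hα : α = max (2 - ay - bx) |az - bz|)
    (hβ : β = max (2 - az - bx) (2 - ay - bz))
    (hγ : γ = max (2 + az - bx) (2 - ay + bz)) :
    γ = min α (min β γ) ↔
      ((ay ≤ -az ∧ bx ≤ -bz ∧ az ≤ 0 ∧ bx ≤ ay - az - bz) ∨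
        (ay ≤ -az ∧ bx ≤ -bz ∧ bz ≤ 0 ∧ ay ≤ bx - az - bz) ∨
        (ay = 1 ∧ -az = 1) ∨ (bx = 1 ∧ -bz = 1)) := by
  obtain ⟨hay1, hay2⟩ := hay
  obtain ⟨haz1, haz2⟩ := haz
  obtain ⟨hbx1, hbx2⟩ := hbx
  obtain ⟨hbz1, hbz2⟩ := hbz
  have habs1 : az - bz ≤ |az - bz| := le_abs_self _
  have habs2 : bz - az ≤ |az - bz| := by rw [abs_sub_comm]; exact le_abs_self _
  have hmin : γ = min α (min β γ) ↔ (γ ≤ α ∧ γ ≤ β) := by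
    constructor
    · intro h
      exact ⟨(le_of_eq h).trans (min_le_left _ _),
        ((le_of_eq h).trans (min_le_right _ _)).trans (min_le_left _ _)⟩
    · rintro ⟨h1, h2⟩
      exact le_antisymm (le_min h1 (le_min h2 le_rfl))
        ((min_le_right _ _).trans (min_le_right _ _))
  rw [hmin]
  subst hα hβ hγ
  constructor
  · rintro ⟨h1, h2⟩
    rw [max_le_iff] at h1 h2
    obtain ⟨h1a, h1b⟩ := h1
    obtain ⟨h2a, h2b⟩ := h2
    rw [le_max_iff] at h1a h1b h2a h2b
    rcases abs_cases (az - bz) with ⟨he, hs⟩ | ⟨he, hs⟩ <;> rw [he] at h1a h1b <;>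
    rcases h1a with h1a | h1a <;> rcases h1b with h1b | h1b <;>
    rcases h2a with h2a | h2a <;> rcases h2b with h2b | h2b <;>
    rcases le_total (bx + bz) (ay - az) with hle | hle <;>
      first
      | (left; exact ⟨by linarith, by linarith, by linarith, by linarith⟩)
      | (right; left; exact ⟨by linarith, by linarith, by linarith, by linarith⟩)
      | (right; right; left; constructor <;> linarith)
      | (right; right; right; constructor <;> linarith)
  · rintro (⟨h1, h2, h3, h4⟩ | ⟨h1, h2, h3, h4⟩ | ⟨h1, h2⟩ | ⟨h1, h2⟩) <;>
      constructor <;> rw [max_le_iff] <;> constructor <;> rw [le_max_iff] <;>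
      first | (left; linarith) | (right; linarith)
end

section
/- Let a_y, a_z, b_x, b_z ∈ [−1,1]. The minimum over z ∈ [−1,1] of the function f(z) = max{1 − a_y, |z − a_z|} + max{1 − b_x, |z − b_z|} equals max{2 − a_y − b_x, |a_z − b_z|}. -/
theorem statement6 (ay az bx bz : ℝ)
    (hay : ay ∈ Set.Icc (-1:ℝ) 1) (haz : az ∈ Set.Icc (-1:ℝ) 1)
    (hbx : bx ∈ Set.Icc (-1:ℝ) 1) (hbz : bz ∈ Set.Icc (-1:ℝ) 1) :
    IsLeast
      ((fun z : ℝ => max (1 - ay) |z - az| + max (1 - bx) |z - bz|) ''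
        Set.Icc (-1:ℝ) 1)
      (max (2 - ay - bx) |az - bz|) := by
  obtain ⟨ha1, ha2⟩ := hay
  obtain ⟨haz1, haz2⟩ := haz
  obtain ⟨hb1, hb2⟩ := hbx
  obtain ⟨hbz1, hbz2⟩ := hbz
  constructor
  · -- membership
    rcases le_or_gt |az - bz| (2 - ay - bx) with h | h
    · obtain ⟨hd1, hd2⟩ := abs_sub_le_iff.mp h
      set z := max (max (az - (1 - ay)) (bz - (1 - bx))) (-1) with hzdef
      have hzle1 : z ≤ 1 := by
        apply max_le
        · apply max_le <;> linarith
        · linarith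
      have hza : |z - az| ≤ 1 - ay := by
        rw [abs_le]
        constructor
        · have : az - (1 - ay) ≤ z := le_trans (le_max_left _ _) (le_max_left _ _)
          linarith
        · have h2 : bz - (1 - bx) ≤ az + (1 - ay) := by linarith
          have : z ≤ az + (1 - ay) :=
            max_le (max_le (by linarith) h2) (by linarith)
          linarith
      have hzb : |z - bz| ≤ 1 - bx := by
        rw [abs_le]
        constructor
        · have : bz - (1 - bx) ≤ z := le_trans (le_max_right _ _) (le_max_left _ _)
          linarith
        · have h2 : az - (1 - ay) ≤ bz + (1 - bx) := by linarith
          have : z ≤ bz + (1 - bx) :=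
            max_le (max_le h2 (by linarith)) (by linarith)
          linarith
      refine ⟨z, ⟨le_max_right _ _, hzle1⟩, ?_⟩
      simp only
      rw [max_eq_left hza, max_eq_left hzb, max_eq_left h]
      ring
    · rcases le_total az bz with hab | hab
      · have habs : |az - bz| = bz - az := by
          rw [abs_sub_comm, abs_of_nonneg (by linarith)]
        rw [habs] at h
        refine ⟨az + (1 - ay), ⟨by linarith, by linarith⟩, ?_⟩
        simp only
        have e1 : |az + (1 - ay) - az| = 1 - ay := by
          rw [show az + (1 - ay) - az = 1 - ay by ring, abs_of_nonneg (by linarith)]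
        have e2 : |az + (1 - ay) - bz| = bz - az - (1 - ay) := by
          rw [abs_of_nonpos (by linarith)]; ring
        rw [e1, e2, max_self, max_eq_right (by linarith), max_eq_right (by rw [habs]; linarith), habs]
        ring
      · have habs : |az - bz| = az - bz := abs_of_nonneg (by linarith)
        rw [habs] at h
        refine ⟨az - (1 - ay), ⟨by linarith, by linarith⟩, ?_⟩
        simp only
        have e1 : |az - (1 - ay) - az| = 1 - ay := by
          rw [show az - (1 - ay) - az = -(1 - ay) by ring, abs_neg, abs_of_nonneg (by linarith)]
        have e2 : |az - (1 - ay) - bz| = az - bz - (1 - ay) := by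
          rw [abs_of_nonneg (by linarith)]; ring
        rw [e1, e2, max_self, max_eq_right (by linarith), max_eq_right (by rw [habs]; linarith), habs]
        ring
  · -- lower bound
    rintro y ⟨w, ⟨hw1, hw2⟩, rfl⟩
    simp only
    apply max_le
    · have := le_max_left (1 - ay) |w - az|
      have := le_max_left (1 - bx) |w - bz|
      linarith
    · have h1 : |az - bz| ≤ |w - az| + |w - bz| := by
        calc |az - bz| = |(az - w) + (w - bz)| := by ring_nf
          _ ≤ |az - w| + |w - bz| := abs_add_le _ _
          _ = |w - az| + |w - bz| := by rw [abs_sub_comm az w]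
      have := le_max_right (1 - ay) |w - az|
      have := le_max_right (1 - bx) |w - bz|
      linarith
end

section
/- Let a_y, a_z, b_x, b_z ∈ [−1,1]. The minimum over (x, y) ∈ [−1,1] × [−1,1] of the function g(x,y) = max{|y − a_y|, 1 − a_z} + max{1 − x, 1 − y} + max{|x − b_x|, 1 − b_z} equals β₁ = max{2 − a_z − b_x, 2 − a_y − b_z, 2 − a_z − b_z}. -/
theorem statement7 (ay az bx bz : ℝ)
    (hay : ay ∈ Set.Icc (-1:ℝ) 1) (haz : az ∈ Set.Icc (-1:ℝ) 1)
    (hbx : bx ∈ Set.Icc (-1:ℝ) 1) (hbz : bz ∈ Set.Icc (-1:ℝ) 1) :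
    IsLeast
      ((fun p : ℝ × ℝ =>
          max |p.2 - ay| (1 - az) + max (1 - p.1) (1 - p.2) + max |p.1 - bx| (1 - bz)) ''
        (Set.Icc (-1:ℝ) 1 ×ˢ Set.Icc (-1:ℝ) 1))
      (max (2 - az - bx) (max (2 - ay - bz) (2 - az - bz))) := by
  obtain ⟨hay1, hay2⟩ := hay
  obtain ⟨haz1, haz2⟩ := haz
  obtain ⟨hbx1, hbx2⟩ := hbx
  obtain ⟨hbz1, hbz2⟩ := hbz
  -- lower bound for all points in the box
  have lb : ∀ x y : ℝ, x ∈ Set.Icc (-1:ℝ) 1 → y ∈ Set.Icc (-1:ℝ) 1 →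
      max (2 - az - bx) (max (2 - ay - bz) (2 - az - bz)) ≤
        max |y - ay| (1 - az) + max (1 - x) (1 - y) + max |x - bx| (1 - bz) := by
    intro x y hx hy
    obtain ⟨hx1, hx2⟩ := hx
    obtain ⟨hy1, hy2⟩ := hy
    have l1 : (1:ℝ) - az ≤ max |y - ay| (1 - az) := le_max_right _ _
    have l2 : y - ay ≤ |y - ay| := le_abs_self _
    have l2' : y - ay ≤ max |y - ay| (1 - az) := le_trans l2 (le_max_left _ _)
    have l3 : (1:ℝ) - x ≤ max (1 - x) (1 - y) := le_max_left _ _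
    have l4 : (1:ℝ) - y ≤ max (1 - x) (1 - y) := le_max_right _ _
    have l5 : x - bx ≤ |x - bx| := le_abs_self _
    have l5' : x - bx ≤ max |x - bx| (1 - bz) := le_trans l5 (le_max_left _ _)
    have l6 : (1:ℝ) - bz ≤ max |x - bx| (1 - bz) := le_max_right _ _
    refine max_le (by linarith) (max_le (by linarith) (by linarith))
  constructor
  · refine ⟨(min 1 (bx + 1 - bz), min 1 (ay + 1 - az)), ⟨⟨le_min (by norm_num) (by linarith),
      min_le_left _ _⟩, ⟨le_min (by norm_num) (by linarith), min_le_left _ _⟩⟩, ?_⟩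
    simp only
    set x := min 1 (bx + 1 - bz) with hxdef
    set y := min 1 (ay + 1 - az) with hydef
    have hyA : ay ≤ y := le_min hay2 (by linarith)
    have hyB : y ≤ ay + 1 - az := min_le_right _ _
    have hxA : bx ≤ x := le_min hbx2 (by linarith)
    have hxB : x ≤ bx + 1 - bz := min_le_right _ _
    have e1 : max |y - ay| (1 - az) = 1 - az :=
      max_eq_right (by rw [abs_of_nonneg (by linarith)]; linarith)
    have e3 : max |x - bx| (1 - bz) = 1 - bz :=
      max_eq_right (by rw [abs_of_nonneg (by linarith)]; linarith)
    rw [e1, e3]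
    have hxmem : x ∈ Set.Icc (-1:ℝ) 1 := ⟨le_min (by norm_num) (by linarith), min_le_left _ _⟩
    have hymem : y ∈ Set.Icc (-1:ℝ) 1 := ⟨le_min (by norm_num) (by linarith), min_le_left _ _⟩
    have hge := lb x y hxmem hymem
    rw [e1, e3] at hge
    apply le_antisymm _ hge
    have hb1 : 2 - az - bx ≤ max (2 - az - bx) (max (2 - ay - bz) (2 - az - bz)) :=
      le_max_left _ _
    have hb2 : 2 - ay - bz ≤ max (2 - az - bx) (max (2 - ay - bz) (2 - az - bz)) :=
      le_trans (le_max_left _ _) (le_max_right _ _)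
    have hb3 : 2 - az - bz ≤ max (2 - az - bx) (max (2 - ay - bz) (2 - az - bz)) :=
      le_trans (le_max_right _ _) (le_max_right _ _)
    have hmx : max (1 - x) (1 - y) ≤
        max (2 - az - bx) (max (2 - ay - bz) (2 - az - bz)) - (1 - az) - (1 - bz) := by
      apply max_le
      · rcases le_total (1:ℝ) (bx + 1 - bz) with h | h
        · have : x = 1 := min_eq_left h
          rw [this]; linarith
        · have : x = bx + 1 - bz := min_eq_right h
          rw [this]; linarith
      · rcases le_total (1:ℝ) (ay + 1 - az) with h | h
        · have : y = 1 := min_eq_left h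
          rw [this]; linarith
        · have : y = ay + 1 - az := min_eq_right h
          rw [this]; linarith
    linarith
  · rintro v ⟨⟨x, y⟩, ⟨hx, hy⟩, rfl⟩
    exact lb x y hx hy
end

section
/- Let a_y, a_z, b_x, b_z ∈ [−1,1]. The minimum over (x, y) ∈ [−1,1] × [−1,1] of the function h(x,y) = max{|y − a_y|, 1 + a_z} + max{1 − x, 1 − y} + max{|x − b_x|, 1 + b_z} equals γ₁ = max{2 + a_z − b_x, 2 − a_y + b_z, 2 + a_z + b_z}. -/
theorem statement8 (ay az bx bz : ℝ)
    (hay : ay ∈ Set.Icc (-1:ℝ) 1) (haz : az ∈ Set.Icc (-1:ℝ) 1)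
    (hbx : bx ∈ Set.Icc (-1:ℝ) 1) (hbz : bz ∈ Set.Icc (-1:ℝ) 1) :
    IsLeast
      ((fun p : ℝ × ℝ =>
          max |p.2 - ay| (1 + az) + max (1 - p.1) (1 - p.2) + max |p.1 - bx| (1 + bz)) ''
        (Set.Icc (-1:ℝ) 1 ×ˢ Set.Icc (-1:ℝ) 1))
      (max (2 + az - bx) (max (2 - ay + bz) (2 + az + bz))) := by
  obtain ⟨hay1, hay2⟩ := hay
  obtain ⟨haz1, haz2⟩ := haz
  obtain ⟨hbx1, hbx2⟩ := hbx
  obtain ⟨hbz1, hbz2⟩ := hbz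
  constructor
  · refine ⟨(min 1 (bx + 1 + bz), min 1 (ay + 1 + az)), ⟨⟨?_, ?_⟩, ⟨?_, ?_⟩⟩, ?_⟩
    · simp only [le_min_iff]; constructor <;> linarith
    · exact min_le_left _ _
    · simp only [le_min_iff]; constructor <;> linarith
    · exact min_le_left _ _
    · simp only
      rcases le_total (ay + 1 + az) 1 with hA | hA <;>
      rcases le_total (bx + 1 + bz) 1 with hB | hB
      · rw [min_eq_right hB, min_eq_right hA,
          abs_of_nonneg (by linarith : (0:ℝ) ≤ ay + 1 + az - ay),
          abs_of_nonneg (by linarith : (0:ℝ) ≤ bx + 1 + bz - bx)]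
        simp only [max_def]; split_ifs <;> linarith
      · rw [min_eq_right hA, min_eq_left hB,
          abs_of_nonneg (by linarith : (0:ℝ) ≤ ay + 1 + az - ay),
          abs_of_nonneg (by linarith : (0:ℝ) ≤ (1:ℝ) - bx)]
        simp only [max_def]; split_ifs <;> linarith
      · rw [min_eq_left hA, min_eq_right hB,
          abs_of_nonneg (by linarith : (0:ℝ) ≤ (1:ℝ) - ay),
          abs_of_nonneg (by linarith : (0:ℝ) ≤ bx + 1 + bz - bx)]
        simp only [max_def]; split_ifs <;> linarith
      · rw [min_eq_left hA, min_eq_left hB,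
          abs_of_nonneg (by linarith : (0:ℝ) ≤ (1:ℝ) - ay),
          abs_of_nonneg (by linarith : (0:ℝ) ≤ (1:ℝ) - bx)]
        simp only [max_def]; split_ifs <;> linarith
  · rintro v ⟨⟨x, y⟩, ⟨⟨hx1, hx2⟩, ⟨hy1, hy2⟩⟩, rfl⟩
    simp only
    have e1 : (1:ℝ) + az ≤ max |y - ay| (1 + az) := le_max_right _ _
    have e1' : y - ay ≤ max |y - ay| (1 + az) := le_trans (le_abs_self _) (le_max_left _ _)
    have e2 : 1 - x ≤ max (1 - x) (1 - y) := le_max_left _ _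
    have e2' : 1 - y ≤ max (1 - x) (1 - y) := le_max_right _ _
    have e3 : (1:ℝ) + bz ≤ max |x - bx| (1 + bz) := le_max_right _ _
    have e3' : x - bx ≤ max |x - bx| (1 + bz) := le_trans (le_abs_self _) (le_max_left _ _)
    refine max_le (by linarith) (max_le (by linarith) (by linarith))
end

section
/- Let a, b, c, d ∈ [−1,1] and set α = max{2 − a − c, |b − d|}, β₁ = max{2 − b − c, 2 − a − d, 2 − b − d}, γ₁ = max{2 + b − c, 2 − a + d, 2 + b + d}. Then α = min{α, β₁, γ₁} if and only if at least one of the following four conditions holds: (1) |b| ≤ a; (2) |d| ≤ c; (3) |a| ≤ b and |c| ≤ −d; (4) |a| ≤ −b and |c| ≤ d. -/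
theorem statement9 (a b c d α β₁ γ₁ : ℝ)
    (ha : a ∈ Set.Icc (-1:ℝ) 1) (hb : b ∈ Set.Icc (-1:ℝ) 1)
    (hc : c ∈ Set.Icc (-1:ℝ) 1) (hd : d ∈ Set.Icc (-1:ℝ) 1)
    (hα : α = max (2 - a - c) |b - d|)
    (hβ₁ : β₁ = max (2 - b - c) (max (2 - a - d) (2 - b - d)))
    (hγ₁ : γ₁ = max (2 + b - c) (max (2 - a + d) (2 + b + d))) :
    α = min α (min β₁ γ₁) ↔
      (|b| ≤ a ∨ |d| ≤ c ∨ (|a| ≤ b ∧ |c| ≤ -d) ∨ (|a| ≤ -b ∧ |c| ≤ d)) := by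
  obtain ⟨ha1, ha2⟩ := ha
  obtain ⟨hb1, hb2⟩ := hb
  obtain ⟨hc1, hc2⟩ := hc
  obtain ⟨hd1, hd2⟩ := hd
  subst hα hβ₁ hγ₁
  rw [eq_comm, min_eq_left_iff, le_min_iff]
  constructor
  · rintro ⟨h1, h2⟩
    rw [max_le_iff] at h1 h2
    obtain ⟨h1a, -⟩ := h1
    obtain ⟨h2a, -⟩ := h2
    rw [le_max_iff, le_max_iff] at h1a h2a
    have e1 : b ≤ a ∨ d ≤ c := by
      rcases h1a with h | h | h
      · left; linarith
      · right; linarith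
      · rcases le_total b a with h' | h'
        · exact Or.inl h'
        · right; linarith
    have e2 : -b ≤ a ∨ -d ≤ c := by
      rcases h2a with h | h | h
      · left; linarith
      · right; linarith
      · rcases le_total (-b) a with h' | h'
        · exact Or.inl h'
        · right; linarith
    rcases e1 with e1 | e1 <;> rcases e2 with e2 | e2
    · exact Or.inl (abs_le.mpr ⟨by linarith, e1⟩)
    · by_cases H1 : -b ≤ a
      · exact Or.inl (abs_le.mpr ⟨by linarith, e1⟩)
      · by_cases H2 : d ≤ c
        · exact Or.inr (Or.inl (abs_le.mpr ⟨by linarith, H2⟩))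
        · push_neg at H1 H2
          exact Or.inr (Or.inr (Or.inr ⟨abs_le.mpr ⟨by linarith, by linarith⟩,
            abs_le.mpr ⟨by linarith, by linarith⟩⟩))
    · by_cases H1 : -d ≤ c
      · exact Or.inr (Or.inl (abs_le.mpr ⟨by linarith, e1⟩))
      · by_cases H2 : b ≤ a
        · exact Or.inl (abs_le.mpr ⟨by linarith, H2⟩)
        · push_neg at H1 H2
          exact Or.inr (Or.inr (Or.inl ⟨abs_le.mpr ⟨by linarith, by linarith⟩,
            abs_le.mpr ⟨by linarith, by linarith⟩⟩))
    · exact Or.inr (Or.inl (abs_le.mpr ⟨by linarith, e1⟩))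
  · intro h
    have e1 : b ≤ a ∨ d ≤ c := by
      rcases h with h | h | ⟨h1, h2⟩ | ⟨h1, h2⟩
      · exact Or.inl (by linarith [(abs_le.mp h).2])
      · exact Or.inr (by linarith [(abs_le.mp h).2])
      · exact Or.inr (by linarith [(abs_le.mp h2).1])
      · exact Or.inl (by linarith [(abs_le.mp h1).1])
    have e2 : -b ≤ a ∨ -d ≤ c := by
      rcases h with h | h | ⟨h1, h2⟩ | ⟨h1, h2⟩
      · exact Or.inl (by linarith [(abs_le.mp h).1])
      · exact Or.inr (by linarith [(abs_le.mp h).1])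
      · exact Or.inl (by linarith [(abs_le.mp h1).1])
      · exact Or.inr (by linarith [(abs_le.mp h2).1])
    constructor <;> rw [max_le_iff] <;> refine ⟨?_, ?_⟩
    · rw [le_max_iff, le_max_iff]
      rcases e1 with e | e
      · left; linarith
      · right; left; linarith
    · rw [abs_sub_le_iff]
      constructor <;> rw [le_max_iff, le_max_iff]
      · right; left; linarith
      · right; right; linarith
    · rw [le_max_iff, le_max_iff]
      rcases e2 with e | e
      · left; linarith
      · right; left; linarith
    · rw [abs_sub_le_iff]
      constructor <;> rw [le_max_iff, le_max_iff]
      · right; right; linarith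
      · right; left; linarith
end

section
/- Let a, b, c, d ∈ [−1,1] and set α = max{2 − a − c, |b − d|} and β₁ = max{2 − b − c, 2 − a − d, 2 − b − d}. Then β₁ ≤ α if and only if either (i) a ≤ b and c ≤ d, or (ii) a = b = 1, or (iii) c = d = 1. -/
theorem statement10 (a b c d α β₁ : ℝ)
    (ha : a ∈ Set.Icc (-1:ℝ) 1) (hb : b ∈ Set.Icc (-1:ℝ) 1)
    (hc : c ∈ Set.Icc (-1:ℝ) 1) (hd : d ∈ Set.Icc (-1:ℝ) 1)
    (hα : α = max (2 - a - c) |b - d|)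
    (hβ₁ : β₁ = max (2 - b - c) (max (2 - a - d) (2 - b - d))) :
    β₁ ≤ α ↔ ((a ≤ b ∧ c ≤ d) ∨ (a = 1 ∧ b = 1) ∨ (c = 1 ∧ d = 1)) := by
  obtain ⟨ha1, ha2⟩ := ha
  obtain ⟨hb1, hb2⟩ := hb
  obtain ⟨hc1, hc2⟩ := hc
  obtain ⟨hd1, hd2⟩ := hd
  subst hα hβ₁
  rcases abs_cases (b - d) with ⟨he, he2⟩ | ⟨he, he2⟩ <;> rw [he, max_le_iff, max_le_iff] <;>
    simp only [le_max_iff] <;> constructor <;> intro h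
  · obtain ⟨h1 | h1, ⟨h2 | h2, h3 | h3⟩⟩ := h <;>
      first
      | exact Or.inl ⟨by linarith, by linarith⟩
      | exact Or.inr (Or.inl ⟨by linarith, by linarith⟩)
      | exact Or.inr (Or.inr ⟨by linarith, by linarith⟩)
  · rcases h with ⟨h1, h2⟩ | ⟨h1, h2⟩ | ⟨h1, h2⟩ <;>
      refine ⟨?_, ?_, ?_⟩ <;> first | (left; linarith) | (right; linarith)
  · obtain ⟨h1 | h1, ⟨h2 | h2, h3 | h3⟩⟩ := h <;>
      first
      | exact Or.inl ⟨by linarith, by linarith⟩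
      | exact Or.inr (Or.inl ⟨by linarith, by linarith⟩)
      | exact Or.inr (Or.inr ⟨by linarith, by linarith⟩)
  · rcases h with ⟨h1, h2⟩ | ⟨h1, h2⟩ | ⟨h1, h2⟩ <;>
      refine ⟨?_, ?_, ?_⟩ <;> first | (left; linarith) | (right; linarith)
end

section
/- Let A = (1, a, b) and B = (−1, c, d) be points of X. Then the geodesic distance d(A,B) equals the minimum of the twelve quantities: s₁ = 4 − a − c; s₂ = 4 + a + c; s₃ = 4 − b − d; s₄ = 4 + b + d; s₅ = max{2 − a − d, 4 − b − c}; s₆ = max{2 − a + d, 4 + b − c}; s₇ = max{2 + a − d, 4 − b + c}; s₈ = max{2 + a + d, 4 + b + c}; s₉ = max{2 − b − c, 4 − a − d}; s₁₀ = max{2 + b − c, 4 − a + d}; s₁₁ = max{2 − b + c, 4 + a − d}; s₁₂ = max{2 + b + c, 4 + a + d}. -/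
open Set
open scoped ENNReal

/-- The geodesic distance between two points on the unit sphere (for the sup norm)
of `Fin n → ℝ`: the infimum over continuous paths `γ : [0,1] → {x : ‖x‖ = 1}` joining
them of the length of `γ`, i.e. its total variation. -/
noncomputable def geoDist {n : ℕ} (A B : Fin n → ℝ) : ℝ≥0∞ :=
  ⨅ (γ : ℝ → (Fin n → ℝ)) (_ : ContinuousOn γ (Icc 0 1)) (_ : γ 0 = A)
    (_ : γ 1 = B) (_ : ∀ t ∈ Icc (0:ℝ) 1, ‖γ t‖ = 1),
    eVariationOn γ (Icc 0 1)

section Geo13Aux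
open Filter Topology

namespace Geo13


lemma exists_norm_coord (v : Fin 3 → ℝ) : ∃ i, ‖v‖ = |v i| := by
  obtain ⟨i, -, hi⟩ := Finset.exists_mem_eq_sup (Finset.univ : Finset (Fin 3))
    ⟨0, Finset.mem_univ 0⟩ (fun i => ‖v i‖₊)
  exact ⟨i, by rw [Pi.norm_def, hi]; simp [Real.norm_eq_abs]⟩

lemma norm_eq_one_of (v : Fin 3 → ℝ) (hle : ∀ i, |v i| ≤ 1) (i0 : Fin 3) (h1 : |v i0| = 1) :
    ‖v‖ = 1 := by
  refine le_antisymm ?_ ?_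
  · rw [pi_norm_le_iff_of_nonneg (by norm_num : (0:ℝ) ≤ 1)]
    intro i; simpa [Real.norm_eq_abs] using hle i
  · rw [← h1]; simpa [Real.norm_eq_abs] using norm_le_pi_norm v i0

lemma abs_coord_le (v : Fin 3 → ℝ) (h : ‖v‖ = 1) (i : Fin 3) : |v i| ≤ 1 := by
  rw [← h]; simpa [Real.norm_eq_abs] using norm_le_pi_norm v i

lemma icc_split (γ : ℝ → (Fin 3 → ℝ)) {u b m : ℝ} (h1 : u ≤ b) (h2 : b ≤ m) :
    eVariationOn γ (Icc u b) + eVariationOn γ (Icc b m) = eVariationOn γ (Icc u m) := by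
  have e1 : Icc u m ∩ Icc u b = Icc u b := by
    ext x; simp only [mem_inter_iff, mem_Icc]
    exact ⟨fun h => ⟨h.2.1, h.2.2⟩, fun h => ⟨⟨h.1, h.2.trans h2⟩, h.1, h.2⟩⟩
  have e2 : Icc u m ∩ Icc b m = Icc b m := by
    ext x; simp only [mem_inter_iff, mem_Icc]
    exact ⟨fun h => ⟨h.2.1, h.2.2⟩, fun h => ⟨⟨h1.trans h.1, h.2⟩, h.1, h.2⟩⟩
  have e3 : Icc u m ∩ Icc u m = Icc u m := inter_self _
  have := eVariationOn.Icc_add_Icc γ (s := Icc u m) h1 h2 ⟨h1, h2⟩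
  rwa [e1, e2, e3] at this




lemma pigeon {N : ℕ} {C : Fin (N+1) → Set (Fin 3 → ℝ)} (hC : ∀ i, IsClosed (C i))
    {γ : ℝ → (Fin 3 → ℝ)} {u v m : ℝ} (hγ : ContinuousOn γ (Icc u v)) (hm : m ∈ Icc u v)
    {s : ℕ → ℝ} (hs : ∀ n, s n ∈ Icc u v) (hsC : ∀ n, ∃ i, γ (s n) ∈ C i)
    (hlim : Tendsto s atTop (𝓝 m)) :
    ∃ i, γ m ∈ C i ∧ ∃ n, γ (s n) ∈ C i := by
  choose I hI using hsC
  obtain ⟨i, hi⟩ := Finite.exists_infinite_fiber I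
  have hinf := Set.infinite_coe_iff.mp hi
  have hfreq : ∃ᶠ n in atTop, I n = i := by
    rw [frequently_atTop]
    intro a
    obtain ⟨b, hb, hab⟩ := hinf.exists_gt a
    exact ⟨b, hab.le, hb⟩
  obtain ⟨φ, hφ, hφi⟩ := extraction_of_frequently_atTop hfreq
  have h0 : Tendsto (fun n => s (φ n)) atTop (𝓝[Icc u v] m) :=
    tendsto_nhdsWithin_of_tendsto_nhds_of_eventually_within _
      (hlim.comp hφ.tendsto_atTop) (Eventually.of_forall fun n => hs _)
  have h1 : Tendsto (fun n => γ (s (φ n))) atTop (𝓝 (γ m)) := (hγ m hm).tendsto.comp h0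
  have h2 : γ m ∈ C i :=
    (hC i).mem_of_tendsto h1 (Eventually.of_forall fun n => hφi n ▸ hI (φ n))
  exact ⟨i, h2, φ 0, hφi 0 ▸ hI (φ 0)⟩

/-- Key chaining lemma: a potential which is 1-Lipschitz on each closed piece
gives a lower bound on the variation of any path moving through the pieces. -/
lemma chain {N : ℕ} {C : Fin (N+1) → Set (Fin 3 → ℝ)} (hC : ∀ i, IsClosed (C i))
    {γ : ℝ → (Fin 3 → ℝ)} {Φ : (Fin 3 → ℝ) → ℝ} {u v : ℝ} (huv : u ≤ v)
    (hγ : ContinuousOn γ (Icc u v)) (hmem : ∀ t ∈ Icc u v, ∃ i, γ t ∈ C i)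
    (hLip : ∀ i, ∀ p ∈ C i, ∀ q ∈ C i, Φ q - Φ p ≤ dist p q) :
    ENNReal.ofReal (Φ (γ v) - Φ (γ u)) ≤ eVariationOn γ (Icc u v) := by
  set K := {t | t ∈ Icc u v ∧
    ENNReal.ofReal (Φ (γ t) - Φ (γ u)) ≤ eVariationOn γ (Icc u t)} with hK
  have huK : u ∈ K := ⟨⟨le_refl u, huv⟩, by simp⟩
  have hKne : K.Nonempty := ⟨u, huK⟩
  have hKsub : K ⊆ Icc u v := fun t ht => ht.1
  have hKbdd : BddAbove K := BddAbove.mono hKsub bddAbove_Icc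
  set m := sSup K with hm
  have hmIcc : m ∈ Icc u v :=
    ⟨le_csSup hKbdd huK, csSup_le hKne fun t ht => ht.1.2⟩
  -- generic step: if t ∈ K, t ≤ m', γ t and γ m' in a common piece, then m' ∈ K
  have step : ∀ t ∈ K, ∀ m' ∈ Icc u v, t ≤ m' →
      (∃ i, γ t ∈ C i ∧ γ m' ∈ C i) → m' ∈ K := by
    rintro t ht m' hm' htm' ⟨i, hti, hmi⟩
    refine ⟨hm', ?_⟩
    calc ENNReal.ofReal (Φ (γ m') - Φ (γ u))
        = ENNReal.ofReal ((Φ (γ m') - Φ (γ t)) + (Φ (γ t) - Φ (γ u))) := by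
          rw [sub_add_sub_cancel]
      _ ≤ ENNReal.ofReal (Φ (γ m') - Φ (γ t)) + ENNReal.ofReal (Φ (γ t) - Φ (γ u)) :=
          ENNReal.ofReal_add_le
      _ ≤ edist (γ t) (γ m') + eVariationOn γ (Icc u t) := by
          refine add_le_add ?_ ht.2
          rw [edist_dist]
          exact ENNReal.ofReal_le_ofReal (hLip i _ hti _ hmi)
      _ ≤ eVariationOn γ (Icc t m') + eVariationOn γ (Icc u t) := by
          refine add_le_add ?_ (le_refl _)
          exact eVariationOn.edist_le γ ⟨le_refl t, htm'⟩ ⟨htm', le_refl m'⟩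
      _ = eVariationOn γ (Icc u m') := by
          rw [add_comm]; exact icc_split γ ht.1.1 htm'
  -- m ∈ K
  have hmK : m ∈ K := by
    obtain ⟨s, -, hs_tendsto, hsK⟩ := exists_seq_tendsto_sSup hKne hKbdd
    obtain ⟨i, hmi, n, hni⟩ := pigeon hC hγ hmIcc (fun n => hKsub (hsK n))
      (fun n => hmem _ (hKsub (hsK n))) hs_tendsto
    exact step _ (hsK n) m hmIcc (le_csSup hKbdd (hsK n)) ⟨i, hni, hmi⟩
  -- m = v
  rcases eq_or_lt_of_le hmIcc.2 with hmv | hmv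
  · rw [← hmv]; exact hmK.2
  · exfalso
    set s : ℕ → ℝ := fun n => m + (v - m) / (n + 2) with hsdef
    have hs_mem : ∀ n, s n ∈ Icc u v := by
      intro n
      have h2 : (0:ℝ) < n + 2 := by positivity
      have hvm : 0 < v - m := by linarith [hmv]
      have h3 : 0 < (v - m) / (n + 2) := by positivity
      have h1 : (v - m) / (n + 2) ≤ (v - m) / 1 := by
        apply div_le_div_of_nonneg_left hvm.le (by norm_num) (by linarith)
      simp only [div_one] at h1
      constructor
      · show u ≤ m + (v - m) / (n + 2)
        linarith [hmIcc.1]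
      · show m + (v - m) / (n + 2) ≤ v
        linarith
    have hs_gt : ∀ n, m < s n := by
      intro n
      have h2 : (0:ℝ) < n + 2 := by positivity
      have hvm : 0 < v - m := by linarith [hmv]
      have h3 : 0 < (v - m) / (n + 2) := by positivity
      show m < m + (v - m) / (n + 2)
      linarith
    have hs_tendsto : Tendsto s atTop (𝓝 m) := by
      have h1 : Tendsto (fun n : ℕ => (v - m) / (n + 2)) atTop (𝓝 0) := by
        apply Tendsto.div_atTop tendsto_const_nhds
        exact tendsto_atTop_add_const_right atTop 2 tendsto_natCast_atTop_atTop
      simpa using tendsto_const_nhds.add h1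
    obtain ⟨i, hmi, n, hni⟩ := pigeon hC hγ hmIcc hs_mem
      (fun n => hmem _ (hs_mem n)) hs_tendsto
    have : s n ∈ K := step m hmK (s n) (hs_mem n) (hs_gt n).le ⟨i, hmi, hni⟩
    exact absurd (le_csSup hKbdd this) (not_le.mpr (hs_gt n))




/-- angle coordinate on the square circle `max |y| |z| = 1`, with range `[0,8]`. -/
noncomputable def th (y z : ℝ) : ℝ :=
  if y = 1 then 1 - z else if z = -1 then 3 - y else if y = -1 then 5 + z else 7 + y

/-- cyclic distance on `ℝ / 8ℤ` for representatives in `[0,8]`. -/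
noncomputable def dc (α β : ℝ) : ℝ := min |α - β| (8 - |α - β|)

lemma dc_comm (α β : ℝ) : dc α β = dc β α := by unfold dc; rw [abs_sub_comm]

lemma dc_nonneg {α β : ℝ} (h : |α - β| ≤ 8) : 0 ≤ dc α β :=
  le_min (abs_nonneg _) (by linarith)

lemma th_mem {y z : ℝ} (hy : |y| ≤ 1) (hz : |z| ≤ 1) : 0 ≤ th y z ∧ th y z ≤ 8 := by
  rw [abs_le] at hy hz
  unfold th; split_ifs <;> constructor <;> linarith

lemma dc_tri {x y z : ℝ} (hx0 : 0 ≤ x) (hx8 : x ≤ 8) (hy0 : 0 ≤ y) (hy8 : y ≤ 8)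
    (hz0 : 0 ≤ z) (hz8 : z ≤ 8) : dc x z ≤ dc x y + dc y z := by
  unfold dc
  rcases abs_cases (x - z) with ⟨e1, s1⟩ | ⟨e1, s1⟩ <;>
  rcases abs_cases (x - y) with ⟨e2, s2⟩ | ⟨e2, s2⟩ <;>
  rcases abs_cases (y - z) with ⟨e3, s3⟩ | ⟨e3, s3⟩ <;>
  rw [e1, e2, e3] <;> simp only [min_def] <;> split_ifs <;> linarith

lemma abs_dc_sub_dc {x y θ : ℝ} (hx0 : 0 ≤ x) (hx8 : x ≤ 8) (hy0 : 0 ≤ y) (hy8 : y ≤ 8)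
    (hθ0 : 0 ≤ θ) (hθ8 : θ ≤ 8) : |dc x θ - dc y θ| ≤ dc x y := by
  rw [abs_sub_le_iff]
  constructor
  · have := dc_tri hx0 hx8 hy0 hy8 hθ0 hθ8
    linarith
  · have := dc_tri hy0 hy8 hx0 hx8 hθ0 hθ8
    rw [dc_comm y x] at this
    linarith

end Geo13

namespace Geo13

lemma th_y1 (z : ℝ) : th 1 z = 1 - z := if_pos rfl

lemma th_zneg1 {y : ℝ} : th y (-1) = 3 - y := by
  unfold th; split_ifs with h1 h2 <;> first | (subst h1; norm_num) | rfl | simp_all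

lemma th_yneg1 (z : ℝ) : th (-1) z = 5 + z := by
  unfold th
  rw [if_neg (by norm_num : ¬(-1:ℝ) = 1)]
  by_cases h : z = -1
  · rw [if_pos h, h]; norm_num
  · rw [if_neg h, if_pos rfl]

lemma th_z1 {y : ℝ} (hy : y ≠ 1) : th y 1 = 7 + y := by
  unfold th
  rw [if_neg hy, if_neg (by norm_num : ¬(1:ℝ) = -1)]
  by_cases h : y = -1
  · rw [if_pos h, h]; norm_num
  · rw [if_neg h]

lemma dc_le_abs (α β : ℝ) : dc α β ≤ |α - β| := min_le_left _ _

lemma dc_self (α : ℝ) : dc α α = 0 := by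
  unfold dc; simp

lemma dc_strip {py pz qy qz : ℝ}
    (hpy : |py| ≤ 1) (hpz : |pz| ≤ 1) (hqy : |qy| ≤ 1) (hqz : |qz| ≤ 1)
    (hstrip : (py = 1 ∧ qy = 1) ∨ (py = -1 ∧ qy = -1) ∨
      (pz = 1 ∧ qz = 1) ∨ (pz = -1 ∧ qz = -1)) :
    dc (th py pz) (th qy qz) ≤ max |py - qy| |pz - qz| := by
  rw [abs_le] at hpy hpz hqy hqz
  rcases hstrip with ⟨h1, h2⟩ | ⟨h1, h2⟩ | ⟨h1, h2⟩ | ⟨h1, h2⟩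
  · subst h1; subst h2
    rw [th_y1, th_y1]
    refine le_trans (dc_le_abs _ _) (le_trans ?_ (le_max_right _ _))
    rw [show (1 - pz) - (1 - qz) = -(pz - qz) by ring, abs_neg]
  · subst h1; subst h2
    rw [th_yneg1, th_yneg1]
    refine le_trans (dc_le_abs _ _) (le_trans ?_ (le_max_right _ _))
    rw [show (5 + pz) - (5 + qz) = pz - qz by ring]
  · subst h1; subst h2
    by_cases hp : py = 1 <;> by_cases hq : qy = 1
    · subst hp; subst hq; rw [dc_self]; positivity
    · subst hp
      rw [th_y1, th_z1 hq]
      refine le_trans (min_le_right _ _) (le_trans ?_ (le_max_left _ _))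
      rw [show (1:ℝ) - 1 = 0 by ring]
      rw [abs_of_nonpos (by linarith), abs_of_nonneg (by linarith : (0:ℝ) ≤ 1 - qy)]
      linarith
    · subst hq
      rw [th_y1, th_z1 hp]
      refine le_trans (min_le_right _ _) (le_trans ?_ (le_max_left _ _))
      rw [show (1:ℝ) - 1 = 0 by ring]
      rw [abs_of_nonneg (by linarith), abs_of_nonpos (by linarith : py - 1 ≤ 0)]
      linarith
    · rw [th_z1 hp, th_z1 hq]
      refine le_trans (dc_le_abs _ _) (le_trans ?_ (le_max_left _ _))
      rw [show (7 + py) - (7 + qy) = py - qy by ring]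
  · subst h1; subst h2
    rw [th_zneg1, th_zneg1]
    refine le_trans (dc_le_abs _ _) (le_trans ?_ (le_max_left _ _))
    rw [show (3 - py) - (3 - qy) = -(py - qy) by ring, abs_neg]

lemma phi_lip {θ₀ : ℝ} (hθ0 : 0 ≤ θ₀) (hθ8 : θ₀ ≤ 8) {p q : Fin 3 → ℝ}
    (hp0 : |p 0| ≤ 1) (hp1 : |p 1| ≤ 1) (hp2 : |p 2| ≤ 1)
    (hq0 : |q 0| ≤ 1) (hq1 : |q 1| ≤ 1) (hq2 : |q 2| ≤ 1)
    (hstrip : (p 1 = 1 ∧ q 1 = 1) ∨ (p 1 = -1 ∧ q 1 = -1) ∨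
      (p 2 = 1 ∧ q 2 = 1) ∨ (p 2 = -1 ∧ q 2 = -1)) :
    (max (1 - q 0) (dc (th (q 1) (q 2)) θ₀)) -
      (max (1 - p 0) (dc (th (p 1) (p 2)) θ₀)) ≤ dist p q := by
  have hthp := th_mem hp1 hp2
  have hthq := th_mem hq1 hq2
  have h1 : dc (th (p 1) (p 2)) (th (q 1) (q 2)) ≤ dist p q := by
    refine le_trans (dc_strip hp1 hp2 hq1 hq2 hstrip) (max_le ?_ ?_)
    · rw [← Real.dist_eq]; exact dist_le_pi_dist p q 1
    · rw [← Real.dist_eq]; exact dist_le_pi_dist p q 2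
  refine le_trans (le_abs_self _) (le_trans (abs_max_sub_max_le_max _ _ _ _) (max_le ?_ ?_))
  · rw [show (1 - q 0) - (1 - p 0) = p 0 - q 0 by ring, ← Real.dist_eq]
    exact dist_le_pi_dist p q 0
  · refine le_trans (abs_dc_sub_dc hthq.1 hthq.2 hthp.1 hthp.2 hθ0 hθ8) ?_
    rw [dc_comm]; exact h1



lemma key {a b c d p₁ p₂ q₁ q₂ : ℝ}
    (ha : -1 ≤ a) (ha' : a ≤ 1) (hb : -1 ≤ b) (hb' : b ≤ 1)
    (hc : -1 ≤ c) (hc' : c ≤ 1) (hd : -1 ≤ d) (hd' : d ≤ 1)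
    (hp₁ : |p₁| ≤ 1) (hp₂ : |p₂| ≤ 1) (hq₁ : |q₁| ≤ 1) (hq₂ : |q₂| ≤ 1)
    (hP : p₁ = 1 ∨ p₁ = -1 ∨ p₂ = 1 ∨ p₂ = -1)
    (hQ : q₁ = 1 ∨ q₁ = -1 ∨ q₂ = 1 ∨ q₂ = -1) :
    min (4-a-c) (min (4+a+c) (min (4-b-d) (min (4+b+d)
      (min (max (2-a-d) (4-b-c)) (min (max (2-a+d) (4+b-c))
      (min (max (2+a-d) (4-b+c)) (min (max (2+a+d) (4+b+c))
      (min (max (2-b-c) (4-a-d)) (min (max (2+b-c) (4-a+d))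
      (min (max (2-b+c) (4+a-d)) (max (2+b+c) (4+a+d)))))))))))) ≤
    max |a - p₁| |b - p₂| + max 2 (dc (th q₁ q₂) (th p₁ p₂)) + max |q₁ - c| |q₂ - d| := by
  obtain ⟨hp₁l, hp₁r⟩ := abs_le.mp hp₁
  obtain ⟨hp₂l, hp₂r⟩ := abs_le.mp hp₂
  obtain ⟨hq₁l, hq₁r⟩ := abs_le.mp hq₁
  obtain ⟨hq₂l, hq₂r⟩ := abs_le.mp hq₂
  have A1 : a - p₁ ≤ |a - p₁| := le_abs_self _
  have A2 : p₁ - a ≤ |a - p₁| := by rw [abs_sub_comm]; exact le_abs_self _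
  have B1 : b - p₂ ≤ |b - p₂| := le_abs_self _
  have B2 : p₂ - b ≤ |b - p₂| := by rw [abs_sub_comm]; exact le_abs_self _
  have C1 : q₁ - c ≤ |q₁ - c| := le_abs_self _
  have C2 : c - q₁ ≤ |q₁ - c| := by rw [abs_sub_comm]; exact le_abs_self _
  have D1 : q₂ - d ≤ |q₂ - d| := le_abs_self _
  have D2 : d - q₂ ≤ |q₂ - d| := by rw [abs_sub_comm]; exact le_abs_self _
  have MA1 : |a - p₁| ≤ max |a - p₁| |b - p₂| := le_max_left _ _
  have MA2 : |b - p₂| ≤ max |a - p₁| |b - p₂| := le_max_right _ _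
  have MQ1 : |q₁ - c| ≤ max |q₁ - c| |q₂ - d| := le_max_left _ _
  have MQ2 : |q₂ - d| ≤ max |q₁ - c| |q₂ - d| := le_max_right _ _
  have h2max : (2:ℝ) ≤ max 2 (dc (th q₁ q₂) (th p₁ p₂)) := le_max_left _ _
  have m1 : min (4-a-c) (min (4+a+c) (min (4-b-d) (min (4+b+d) (min (max (2-a-d) (4-b-c)) (min (max (2-a+d) (4+b-c)) (min (max (2+a-d) (4-b+c)) (min (max (2+a+d) (4+b+c)) (min (max (2-b-c) (4-a-d)) (min (max (2+b-c) (4-a+d)) (min (max (2-b+c) (4+a-d)) (max (2+b+c) (4+a+d)))))))))))) ≤ 4-a-c := min_le_left _ _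
  have m2 : min (4-a-c) (min (4+a+c) (min (4-b-d) (min (4+b+d) (min (max (2-a-d) (4-b-c)) (min (max (2-a+d) (4+b-c)) (min (max (2+a-d) (4-b+c)) (min (max (2+a+d) (4+b+c)) (min (max (2-b-c) (4-a-d)) (min (max (2+b-c) (4-a+d)) (min (max (2-b+c) (4+a-d)) (max (2+b+c) (4+a+d)))))))))))) ≤ 4+a+c := le_trans (min_le_right _ _) (min_le_left _ _)
  have m3 : min (4-a-c) (min (4+a+c) (min (4-b-d) (min (4+b+d) (min (max (2-a-d) (4-b-c)) (min (max (2-a+d) (4+b-c)) (min (max (2+a-d) (4-b+c)) (min (max (2+a+d) (4+b+c)) (min (max (2-b-c) (4-a-d)) (min (max (2+b-c) (4-a+d)) (min (max (2-b+c) (4+a-d)) (max (2+b+c) (4+a+d)))))))))))) ≤ 4-b-d := le_trans (min_le_right _ _) (le_trans (min_le_right _ _) (min_le_left _ _))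
  have m4 : min (4-a-c) (min (4+a+c) (min (4-b-d) (min (4+b+d) (min (max (2-a-d) (4-b-c)) (min (max (2-a+d) (4+b-c)) (min (max (2+a-d) (4-b+c)) (min (max (2+a+d) (4+b+c)) (min (max (2-b-c) (4-a-d)) (min (max (2+b-c) (4-a+d)) (min (max (2-b+c) (4+a-d)) (max (2+b+c) (4+a+d)))))))))))) ≤ 4+b+d := le_trans (min_le_right _ _) (le_trans (min_le_right _ _) (le_trans (min_le_right _ _) (min_le_left _ _)))
  have m5 : min (4-a-c) (min (4+a+c) (min (4-b-d) (min (4+b+d) (min (max (2-a-d) (4-b-c)) (min (max (2-a+d) (4+b-c)) (min (max (2+a-d) (4-b+c)) (min (max (2+a+d) (4+b+c)) (min (max (2-b-c) (4-a-d)) (min (max (2+b-c) (4-a+d)) (min (max (2-b+c) (4+a-d)) (max (2+b+c) (4+a+d)))))))))))) ≤ max (2-a-d) (4-b-c) := le_trans (min_le_right _ _) (le_trans (min_le_right _ _) (le_trans (min_le_right _ _) (le_trans (min_le_right _ _) (min_le_left _ _))))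
  have m6 : min (4-a-c) (min (4+a+c) (min (4-b-d) (min (4+b+d) (min (max (2-a-d) (4-b-c)) (min (max (2-a+d) (4+b-c)) (min (max (2+a-d) (4-b+c)) (min (max (2+a+d) (4+b+c)) (min (max (2-b-c) (4-a-d)) (min (max (2+b-c) (4-a+d)) (min (max (2-b+c) (4+a-d)) (max (2+b+c) (4+a+d)))))))))))) ≤ max (2-a+d) (4+b-c) := le_trans (min_le_right _ _) (le_trans (min_le_right _ _) (le_trans (min_le_right _ _) (le_trans (min_le_right _ _) (le_trans (min_le_right _ _) (min_le_left _ _)))))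
  have m7 : min (4-a-c) (min (4+a+c) (min (4-b-d) (min (4+b+d) (min (max (2-a-d) (4-b-c)) (min (max (2-a+d) (4+b-c)) (min (max (2+a-d) (4-b+c)) (min (max (2+a+d) (4+b+c)) (min (max (2-b-c) (4-a-d)) (min (max (2+b-c) (4-a+d)) (min (max (2-b+c) (4+a-d)) (max (2+b+c) (4+a+d)))))))))))) ≤ max (2+a-d) (4-b+c) := le_trans (min_le_right _ _) (le_trans (min_le_right _ _) (le_trans (min_le_right _ _) (le_trans (min_le_right _ _) (le_trans (min_le_right _ _) (le_trans (min_le_right _ _) (min_le_left _ _))))))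
  have m8 : min (4-a-c) (min (4+a+c) (min (4-b-d) (min (4+b+d) (min (max (2-a-d) (4-b-c)) (min (max (2-a+d) (4+b-c)) (min (max (2+a-d) (4-b+c)) (min (max (2+a+d) (4+b+c)) (min (max (2-b-c) (4-a-d)) (min (max (2+b-c) (4-a+d)) (min (max (2-b+c) (4+a-d)) (max (2+b+c) (4+a+d)))))))))))) ≤ max (2+a+d) (4+b+c) := le_trans (min_le_right _ _) (le_trans (min_le_right _ _) (le_trans (min_le_right _ _) (le_trans (min_le_right _ _) (le_trans (min_le_right _ _) (le_trans (min_le_right _ _) (le_trans (min_le_right _ _) (min_le_left _ _)))))))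
  have m9 : min (4-a-c) (min (4+a+c) (min (4-b-d) (min (4+b+d) (min (max (2-a-d) (4-b-c)) (min (max (2-a+d) (4+b-c)) (min (max (2+a-d) (4-b+c)) (min (max (2+a+d) (4+b+c)) (min (max (2-b-c) (4-a-d)) (min (max (2+b-c) (4-a+d)) (min (max (2-b+c) (4+a-d)) (max (2+b+c) (4+a+d)))))))))))) ≤ max (2-b-c) (4-a-d) := le_trans (min_le_right _ _) (le_trans (min_le_right _ _) (le_trans (min_le_right _ _) (le_trans (min_le_right _ _) (le_trans (min_le_right _ _) (le_trans (min_le_right _ _) (le_trans (min_le_right _ _) (le_trans (min_le_right _ _) (min_le_left _ _))))))))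
  have m10 : min (4-a-c) (min (4+a+c) (min (4-b-d) (min (4+b+d) (min (max (2-a-d) (4-b-c)) (min (max (2-a+d) (4+b-c)) (min (max (2+a-d) (4-b+c)) (min (max (2+a+d) (4+b+c)) (min (max (2-b-c) (4-a-d)) (min (max (2+b-c) (4-a+d)) (min (max (2-b+c) (4+a-d)) (max (2+b+c) (4+a+d)))))))))))) ≤ max (2+b-c) (4-a+d) := le_trans (min_le_right _ _) (le_trans (min_le_right _ _) (le_trans (min_le_right _ _) (le_trans (min_le_right _ _) (le_trans (min_le_right _ _) (le_trans (min_le_right _ _) (le_trans (min_le_right _ _) (le_trans (min_le_right _ _) (le_trans (min_le_right _ _) (min_le_left _ _)))))))))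
  have m11 : min (4-a-c) (min (4+a+c) (min (4-b-d) (min (4+b+d) (min (max (2-a-d) (4-b-c)) (min (max (2-a+d) (4+b-c)) (min (max (2+a-d) (4-b+c)) (min (max (2+a+d) (4+b+c)) (min (max (2-b-c) (4-a-d)) (min (max (2+b-c) (4-a+d)) (min (max (2-b+c) (4+a-d)) (max (2+b+c) (4+a+d)))))))))))) ≤ max (2-b+c) (4+a-d) := le_trans (min_le_right _ _) (le_trans (min_le_right _ _) (le_trans (min_le_right _ _) (le_trans (min_le_right _ _) (le_trans (min_le_right _ _) (le_trans (min_le_right _ _) (le_trans (min_le_right _ _) (le_trans (min_le_right _ _) (le_trans (min_le_right _ _) (le_trans (min_le_right _ _) (min_le_left _ _))))))))))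
  have m12 : min (4-a-c) (min (4+a+c) (min (4-b-d) (min (4+b+d) (min (max (2-a-d) (4-b-c)) (min (max (2-a+d) (4+b-c)) (min (max (2+a-d) (4-b+c)) (min (max (2+a+d) (4+b+c)) (min (max (2-b-c) (4-a-d)) (min (max (2+b-c) (4-a+d)) (min (max (2-b+c) (4+a-d)) (max (2+b+c) (4+a+d)))))))))))) ≤ max (2+b+c) (4+a+d) := le_trans (min_le_right _ _) (le_trans (min_le_right _ _) (le_trans (min_le_right _ _) (le_trans (min_le_right _ _) (le_trans (min_le_right _ _) (le_trans (min_le_right _ _) (le_trans (min_le_right _ _) (le_trans (min_le_right _ _) (le_trans (min_le_right _ _) (le_trans (min_le_right _ _) (min_le_right _ _))))))))))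
  by_cases hP1 : p₁ = 1
  · have eP : th p₁ p₂ = 1 - p₂ := by rw [hP1]; exact th_y1 _
    by_cases hQ1 : q₁ = 1
    · have eQ : th q₁ q₂ = 1 - q₂ := by rw [hQ1]; exact th_y1 _
      refine le_trans m1 (by linarith)
    · by_cases hQ2 : q₂ = -1
      · have eQ : th q₁ q₂ = 3 - q₁ := by rw [hQ2]; exact th_zneg1
        have hD : 2 - q₁ + p₂ ≤ dc (th q₁ q₂) (th p₁ p₂) := by
          rw [eP, eQ]; unfold dc
          rw [abs_of_nonneg (by linarith)]
          exact le_min (by linarith) (by linarith)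
        have hD' : 2 - q₁ + p₂ ≤ max 2 (dc (th q₁ q₂) (th p₁ p₂)) := le_trans hD (le_max_right _ _)
        refine le_trans m10 (max_le (by linarith) (by linarith))
      · by_cases hQ3 : q₁ = -1
        · have eQ : th q₁ q₂ = 5 + q₂ := by rw [hQ3]; exact th_yneg1 _
          rcases le_total (4 + q₂ + p₂) 4 with hsp | hsp
          · have hD : 4 + q₂ + p₂ ≤ dc (th q₁ q₂) (th p₁ p₂) := by
              rw [eP, eQ]; unfold dc
              rw [abs_of_nonneg (by linarith)]
              exact le_min (by linarith) (by linarith)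
            have hD' : 4 + q₂ + p₂ ≤ max 2 (dc (th q₁ q₂) (th p₁ p₂)) := le_trans hD (le_max_right _ _)
            refine le_trans m4 (by linarith)
          · have hD : 8 - (4 + q₂ + p₂) ≤ dc (th q₁ q₂) (th p₁ p₂) := by
              rw [eP, eQ]; unfold dc
              rw [abs_of_nonneg (by linarith)]
              exact le_min (by linarith) (by linarith)
            have hD' : 8 - (4 + q₂ + p₂) ≤ max 2 (dc (th q₁ q₂) (th p₁ p₂)) := le_trans hD (le_max_right _ _)
            refine le_trans m3 (by linarith)
        · have hQ4 : q₂ = 1 := by rcases hQ with h|h|h|h <;> first | exact absurd h hQ1 | exact absurd h hQ3 | exact h | exact absurd h hQ2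
          have eQ : th q₁ q₂ = 7 + q₁ := by rw [hQ4]; exact th_z1 hQ1
          have hD : 2 - q₁ - p₂ ≤ dc (th q₁ q₂) (th p₁ p₂) := by
            rw [eP, eQ]; unfold dc
            rw [abs_of_nonneg (by linarith)]
            exact le_min (by linarith) (by linarith)
          have hD' : 2 - q₁ - p₂ ≤ max 2 (dc (th q₁ q₂) (th p₁ p₂)) := le_trans hD (le_max_right _ _)
          refine le_trans m9 (max_le (by linarith) (by linarith))
  · by_cases hP2 : p₂ = -1
    · have eP : th p₁ p₂ = 3 - p₁ := by rw [hP2]; exact th_zneg1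
      by_cases hQ1 : q₁ = 1
      · have eQ : th q₁ q₂ = 1 - q₂ := by rw [hQ1]; exact th_y1 _
        have hD : 2 - p₁ + q₂ ≤ dc (th q₁ q₂) (th p₁ p₂) := by
          rw [eP, eQ]; unfold dc
          rw [abs_of_nonpos (by linarith)]
          exact le_min (by linarith) (by linarith)
        have hD' : 2 - p₁ + q₂ ≤ max 2 (dc (th q₁ q₂) (th p₁ p₂)) := le_trans hD (le_max_right _ _)
        refine le_trans m6 (max_le (by linarith) (by linarith))
      · by_cases hQ2 : q₂ = -1
        · have eQ : th q₁ q₂ = 3 - q₁ := by rw [hQ2]; exact th_zneg1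
          refine le_trans m4 (by linarith)
        · by_cases hQ3 : q₁ = -1
          · have eQ : th q₁ q₂ = 5 + q₂ := by rw [hQ3]; exact th_yneg1 _
            have hD : 2 + q₂ + p₁ ≤ dc (th q₁ q₂) (th p₁ p₂) := by
              rw [eP, eQ]; unfold dc
              rw [abs_of_nonneg (by linarith)]
              exact le_min (by linarith) (by linarith)
            have hD' : 2 + q₂ + p₁ ≤ max 2 (dc (th q₁ q₂) (th p₁ p₂)) := le_trans hD (le_max_right _ _)
            refine le_trans m8 (max_le (by linarith) (by linarith))
          · have hQ4 : q₂ = 1 := by rcases hQ with h|h|h|h <;> first | exact absurd h hQ1 | exact absurd h hQ3 | exact h | exact absurd h hQ2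
            have eQ : th q₁ q₂ = 7 + q₁ := by rw [hQ4]; exact th_z1 hQ1
            rcases le_total (4 + q₁ + p₁) 4 with hsp | hsp
            · have hD : 4 + q₁ + p₁ ≤ dc (th q₁ q₂) (th p₁ p₂) := by
                rw [eP, eQ]; unfold dc
                rw [abs_of_nonneg (by linarith)]
                exact le_min (by linarith) (by linarith)
              have hD' : 4 + q₁ + p₁ ≤ max 2 (dc (th q₁ q₂) (th p₁ p₂)) := le_trans hD (le_max_right _ _)
              refine le_trans m2 (by linarith)
            · have hD : 8 - (4 + q₁ + p₁) ≤ dc (th q₁ q₂) (th p₁ p₂) := by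
                rw [eP, eQ]; unfold dc
                rw [abs_of_nonneg (by linarith)]
                exact le_min (by linarith) (by linarith)
              have hD' : 8 - (4 + q₁ + p₁) ≤ max 2 (dc (th q₁ q₂) (th p₁ p₂)) := le_trans hD (le_max_right _ _)
              refine le_trans m1 (by linarith)
    · by_cases hP3 : p₁ = -1
      · have eP : th p₁ p₂ = 5 + p₂ := by rw [hP3]; exact th_yneg1 _
        by_cases hQ1 : q₁ = 1
        · have eQ : th q₁ q₂ = 1 - q₂ := by rw [hQ1]; exact th_y1 _
          rcases le_total (4 + p₂ + q₂) 4 with hsp | hsp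
          · have hD : 4 + p₂ + q₂ ≤ dc (th q₁ q₂) (th p₁ p₂) := by
              rw [eP, eQ]; unfold dc
              rw [abs_of_nonpos (by linarith)]
              exact le_min (by linarith) (by linarith)
            have hD' : 4 + p₂ + q₂ ≤ max 2 (dc (th q₁ q₂) (th p₁ p₂)) := le_trans hD (le_max_right _ _)
            refine le_trans m4 (by linarith)
          · have hD : 8 - (4 + p₂ + q₂) ≤ dc (th q₁ q₂) (th p₁ p₂) := by
              rw [eP, eQ]; unfold dc
              rw [abs_of_nonpos (by linarith)]
              exact le_min (by linarith) (by linarith)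
            have hD' : 8 - (4 + p₂ + q₂) ≤ max 2 (dc (th q₁ q₂) (th p₁ p₂)) := le_trans hD (le_max_right _ _)
            refine le_trans m3 (by linarith)
        · by_cases hQ2 : q₂ = -1
          · have eQ : th q₁ q₂ = 3 - q₁ := by rw [hQ2]; exact th_zneg1
            have hD : 2 + p₂ + q₁ ≤ dc (th q₁ q₂) (th p₁ p₂) := by
              rw [eP, eQ]; unfold dc
              rw [abs_of_nonpos (by linarith)]
              exact le_min (by linarith) (by linarith)
            have hD' : 2 + p₂ + q₁ ≤ max 2 (dc (th q₁ q₂) (th p₁ p₂)) := le_trans hD (le_max_right _ _)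
            refine le_trans m12 (max_le (by linarith) (by linarith))
          · by_cases hQ3 : q₁ = -1
            · have eQ : th q₁ q₂ = 5 + q₂ := by rw [hQ3]; exact th_yneg1 _
              refine le_trans m2 (by linarith)
            · have hQ4 : q₂ = 1 := by rcases hQ with h|h|h|h <;> first | exact absurd h hQ1 | exact absurd h hQ3 | exact h | exact absurd h hQ2
              have eQ : th q₁ q₂ = 7 + q₁ := by rw [hQ4]; exact th_z1 hQ1
              have hD : 2 + q₁ - p₂ ≤ dc (th q₁ q₂) (th p₁ p₂) := by
                rw [eP, eQ]; unfold dc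
                rw [abs_of_nonneg (by linarith)]
                exact le_min (by linarith) (by linarith)
              have hD' : 2 + q₁ - p₂ ≤ max 2 (dc (th q₁ q₂) (th p₁ p₂)) := le_trans hD (le_max_right _ _)
              refine le_trans m11 (max_le (by linarith) (by linarith))
      · have hP4 : p₂ = 1 := by rcases hP with h|h|h|h <;> first | exact absurd h hP1 | exact absurd h hP3 | exact h | exact absurd h hP2
        have eP : th p₁ p₂ = 7 + p₁ := by rw [hP4]; exact th_z1 hP1
        by_cases hQ1 : q₁ = 1
        · have eQ : th q₁ q₂ = 1 - q₂ := by rw [hQ1]; exact th_y1 _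
          have hD : 2 - p₁ - q₂ ≤ dc (th q₁ q₂) (th p₁ p₂) := by
            rw [eP, eQ]; unfold dc
            rw [abs_of_nonpos (by linarith)]
            exact le_min (by linarith) (by linarith)
          have hD' : 2 - p₁ - q₂ ≤ max 2 (dc (th q₁ q₂) (th p₁ p₂)) := le_trans hD (le_max_right _ _)
          refine le_trans m5 (max_le (by linarith) (by linarith))
        · by_cases hQ2 : q₂ = -1
          · have eQ : th q₁ q₂ = 3 - q₁ := by rw [hQ2]; exact th_zneg1
            rcases le_total (4 + p₁ + q₁) 4 with hsp | hsp
            · have hD : 4 + p₁ + q₁ ≤ dc (th q₁ q₂) (th p₁ p₂) := by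
                rw [eP, eQ]; unfold dc
                rw [abs_of_nonpos (by linarith)]
                exact le_min (by linarith) (by linarith)
              have hD' : 4 + p₁ + q₁ ≤ max 2 (dc (th q₁ q₂) (th p₁ p₂)) := le_trans hD (le_max_right _ _)
              refine le_trans m2 (by linarith)
            · have hD : 8 - (4 + p₁ + q₁) ≤ dc (th q₁ q₂) (th p₁ p₂) := by
                rw [eP, eQ]; unfold dc
                rw [abs_of_nonpos (by linarith)]
                exact le_min (by linarith) (by linarith)
              have hD' : 8 - (4 + p₁ + q₁) ≤ max 2 (dc (th q₁ q₂) (th p₁ p₂)) := le_trans hD (le_max_right _ _)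
              refine le_trans m1 (by linarith)
          · by_cases hQ3 : q₁ = -1
            · have eQ : th q₁ q₂ = 5 + q₂ := by rw [hQ3]; exact th_yneg1 _
              have hD : 2 + p₁ - q₂ ≤ dc (th q₁ q₂) (th p₁ p₂) := by
                rw [eP, eQ]; unfold dc
                rw [abs_of_nonpos (by linarith)]
                exact le_min (by linarith) (by linarith)
              have hD' : 2 + p₁ - q₂ ≤ max 2 (dc (th q₁ q₂) (th p₁ p₂)) := le_trans hD (le_max_right _ _)
              refine le_trans m7 (max_le (by linarith) (by linarith))
            · have hQ4 : q₂ = 1 := by rcases hQ with h|h|h|h <;> first | exact absurd h hQ1 | exact absurd h hQ3 | exact h | exact absurd h hQ2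
              have eQ : th q₁ q₂ = 7 + q₁ := by rw [hQ4]; exact th_z1 hQ1
              refine le_trans m3 (by linarith)




lemma norm3 (v : Fin 3 → ℝ) : ‖v‖ = max |v 0| (max |v 1| |v 2|) := by
  refine le_antisymm ?_ ?_
  · rw [pi_norm_le_iff_of_nonneg (by positivity)]
    intro i
    fin_cases i
    · exact le_max_left _ _
    · exact le_trans (le_max_left _ _) (le_max_right _ _)
    · exact le_trans (le_max_right _ _) (le_max_right _ _)
  · refine max_le ?_ (max_le ?_ ?_) <;>
      simpa [Real.norm_eq_abs] using norm_le_pi_norm v _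

lemma eVariationOn_comp_map (g : (Fin 3 → ℝ) → (Fin 3 → ℝ))
    (hedist : ∀ v w, edist (g v) (g w) = edist v w) (γ : ℝ → Fin 3 → ℝ) (s : Set ℝ) :
    eVariationOn (fun t => g (γ t)) s = eVariationOn γ s := by
  unfold eVariationOn
  congr 1
  funext p
  exact Finset.sum_congr rfl fun i _ => hedist _ _

lemma geoDist_le_map (g : (Fin 3 → ℝ) → (Fin 3 → ℝ)) (hgc : Continuous g)
    (hnorm : ∀ v, ‖g v‖ = ‖v‖) (hedist : ∀ v w, edist (g v) (g w) = edist v w)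
    (A B : Fin 3 → ℝ) : geoDist (g A) (g B) ≤ geoDist A B := by
  unfold geoDist
  refine le_iInf fun γ => le_iInf fun hcont => le_iInf fun h0 =>
    le_iInf fun h1 => le_iInf fun hsph => ?_
  refine iInf_le_of_le (fun t => g (γ t)) ?_
  refine iInf_le_of_le (hgc.comp_continuousOn hcont) ?_
  refine iInf_le_of_le (by simp only []; rw [h0]) ?_
  refine iInf_le_of_le (by simp only []; rw [h1]) ?_
  refine iInf_le_of_le (fun t ht => by rw [hnorm]; exact hsph t ht) ?_
  rw [eVariationOn_comp_map g hedist]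

noncomputable def negy : (Fin 3 → ℝ) → (Fin 3 → ℝ) := fun v => ![v 0, -(v 1), v 2]
noncomputable def negz : (Fin 3 → ℝ) → (Fin 3 → ℝ) := fun v => ![v 0, v 1, -(v 2)]
noncomputable def negyz : (Fin 3 → ℝ) → (Fin 3 → ℝ) := fun v => ![v 0, -(v 1), -(v 2)]

lemma negy_cont : Continuous negy := by
  apply continuous_pi; intro i; fin_cases i <;> unfold negy <;> simp <;>
    first
      | exact continuous_apply _
      | exact (continuous_apply _).neg

lemma negz_cont : Continuous negz := by
  apply continuous_pi; intro i; fin_cases i <;> unfold negz <;> simp <;>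
    first
      | exact continuous_apply _
      | exact (continuous_apply _).neg

lemma negyz_cont : Continuous negyz := by
  apply continuous_pi; intro i; fin_cases i <;> unfold negyz <;> simp <;>
    first
      | exact continuous_apply _
      | exact (continuous_apply _).neg

lemma negy_norm (v : Fin 3 → ℝ) : ‖negy v‖ = ‖v‖ := by
  rw [norm3, norm3]; unfold negy; simp
lemma negz_norm (v : Fin 3 → ℝ) : ‖negz v‖ = ‖v‖ := by
  rw [norm3, norm3]; unfold negz; simp
lemma negyz_norm (v : Fin 3 → ℝ) : ‖negyz v‖ = ‖v‖ := by
  rw [norm3, norm3]; unfold negyz; simp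

lemma negy_sub (v w : Fin 3 → ℝ) : negy v - negy w = negy (v - w) := by
  funext i; fin_cases i <;> unfold negy <;> simp <;> ring
lemma negz_sub (v w : Fin 3 → ℝ) : negz v - negz w = negz (v - w) := by
  funext i; fin_cases i <;> unfold negz <;> simp <;> ring
lemma negyz_sub (v w : Fin 3 → ℝ) : negyz v - negyz w = negyz (v - w) := by
  funext i; fin_cases i <;> unfold negyz <;> simp <;> ring

lemma negy_edist (v w : Fin 3 → ℝ) : edist (negy v) (negy w) = edist v w := by
  rw [edist_dist, edist_dist, dist_eq_norm, dist_eq_norm, negy_sub, negy_norm]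
lemma negz_edist (v w : Fin 3 → ℝ) : edist (negz v) (negz w) = edist v w := by
  rw [edist_dist, edist_dist, dist_eq_norm, dist_eq_norm, negz_sub, negz_norm]
lemma negyz_edist (v w : Fin 3 → ℝ) : edist (negyz v) (negyz w) = edist v w := by
  rw [edist_dist, edist_dist, dist_eq_norm, dist_eq_norm, negyz_sub, negyz_norm]




lemma evar_id_le : eVariationOn (id : ℝ → ℝ) (Icc 0 1) ≤ 1 := by
  apply iSup_le
  rintro ⟨n, u, hu, us⟩
  have key : ∀ m : ℕ, ∑ i ∈ Finset.range m, edist (u (i+1)) (u i) =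
      ENNReal.ofReal (u m - u 0) := by
    intro m
    induction m with
    | zero => simp
    | succ m ih =>
      rw [Finset.sum_range_succ, ih, edist_dist, Real.dist_eq,
        abs_of_nonneg (sub_nonneg.mpr (hu (Nat.le_succ m))),
        ← ENNReal.ofReal_add (sub_nonneg.mpr (hu (Nat.zero_le m)))
          (sub_nonneg.mpr (hu (Nat.le_succ m)))]
      congr 1
      ring
  simp only [id_eq] at *
  rw [key n]
  calc ENNReal.ofReal (u n - u 0) ≤ ENNReal.ofReal 1 :=
        ENNReal.ofReal_le_ofReal (by linarith [(us n).2, (us 0).1])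
    _ = 1 := ENNReal.ofReal_one

lemma template {a b c d M : ℝ}
    (ha : -1 ≤ a) (ha' : a ≤ 1) (hb : -1 ≤ b) (hb' : b ≤ 1)
    (hc : -1 ≤ c) (hc' : c ≤ 1) (hd : -1 ≤ d) (hd' : d ≤ 1)
    (h1 : 2 - a - d ≤ M) (h2 : 2 - b - c ≤ M) (h3 : 4 - max a b - max c d ≤ M) :
    geoDist ![1, a, b] ![-1, c, d] ≤ ENNReal.ofReal M := by
  have hmab : max a b ≤ 1 := max_le ha' hb'
  have hmcd : max c d ≤ 1 := max_le hc' hd'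
  have hM2 : 2 ≤ M := by linarith
  have hM0 : 0 ≤ M := by linarith
  set s₀ : ℝ := min (1 - a) (1 - b) with hs₀def
  have hs₀0 : 0 ≤ s₀ := le_min (by linarith) (by linarith)
  have hs₀a : s₀ ≤ 1 - a := min_le_left _ _
  have hs₀b : s₀ ≤ 1 - b := min_le_right _ _
  have hs₀m : s₀ + max a b ≤ 1 := by
    rcases le_total a b with h | h
    · rw [max_eq_right h]; linarith
    · rw [max_eq_left h]; linarith
  have hs₀3 : 2 + s₀ ≤ M := by
    have := le_max_left c d
    have := le_max_right c d
    linarith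
  set X : ℝ → ℝ := fun t => max (-1) (min 1 (1 + s₀ - M * t)) with hX
  set Y : ℝ → ℝ := fun t => min 1 (min (a + M * t) (c + M - M * t)) with hY
  set Z : ℝ → ℝ := fun t => min 1 (min (b + M * t) (d + M - M * t)) with hZ
  set γ : ℝ → (Fin 3 → ℝ) := fun t => ![X t, Y t, Z t] with hγ
  have hlin1 : Continuous fun t : ℝ => 1 + s₀ - M * t :=
    continuous_const.sub (continuous_const.mul continuous_id)
  have hlin2 : Continuous fun t : ℝ => a + M * t :=
    continuous_const.add (continuous_const.mul continuous_id)
  have hlin3 : Continuous fun t : ℝ => c + M - M * t :=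
    continuous_const.sub (continuous_const.mul continuous_id)
  have hlin4 : Continuous fun t : ℝ => b + M * t :=
    continuous_const.add (continuous_const.mul continuous_id)
  have hlin5 : Continuous fun t : ℝ => d + M - M * t :=
    continuous_const.sub (continuous_const.mul continuous_id)
  have hXc : Continuous X := continuous_const.max (continuous_const.min hlin1)
  have hYc : Continuous Y := continuous_const.min (hlin2.min hlin3)
  have hZc : Continuous Z := continuous_const.min (hlin4.min hlin5)
  have hγc : Continuous γ := by
    apply continuous_pi
    intro i
    fin_cases i
    · simpa [hγ] using hXc
    · simpa [hγ] using hYc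
    · simpa [hγ] using hZc
  have hγ0 : γ 0 = ![1, a, b] := by
    funext i
    have hX0 : X 0 = 1 := by
      have e : X 0 = max (-1) (min 1 (1 + s₀ - 0)) := by simp [hX]
      rw [e, show (1 + s₀ - 0 : ℝ) = 1 + s₀ by ring,
        min_eq_left (by linarith), max_eq_right (by linarith)]
    have hY0 : Y 0 = a := by
      have e : Y 0 = min 1 (min (a + 0) (c + M - 0)) := by simp [hY]
      rw [e, add_zero, sub_zero, min_eq_left (show a ≤ c + M by linarith),
        min_eq_right ha']
    have hZ0 : Z 0 = b := by
      have e : Z 0 = min 1 (min (b + 0) (d + M - 0)) := by simp [hZ]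
      rw [e, add_zero, sub_zero, min_eq_left (show b ≤ d + M by linarith),
        min_eq_right hb']
    fin_cases i <;> simp [hγ, hX0, hY0, hZ0]
  have hγ1 : γ 1 = ![-1, c, d] := by
    funext i
    have hX1 : X 1 = -1 := by
      have e : X 1 = max (-1) (min 1 (1 + s₀ - M)) := by simp [hX]
      rw [e, min_eq_right (by linarith), max_eq_left (by linarith)]
    have hY1 : Y 1 = c := by
      have e : Y 1 = min 1 (min (a + M) (c + M - M)) := by simp [hY]
      rw [e, show c + M - M = c by ring,
        min_eq_right (show c ≤ a + M by linarith), min_eq_right hc']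
    have hZ1 : Z 1 = d := by
      have e : Z 1 = min 1 (min (b + M) (d + M - M)) := by simp [hZ]
      rw [e, show d + M - M = d by ring,
        min_eq_right (show d ≤ b + M by linarith), min_eq_right hd']
    fin_cases i <;> simp [hγ, hX1, hY1, hZ1]
  have hsph : ∀ t ∈ Icc (0:ℝ) 1, ‖γ t‖ = 1 := by
    intro t ht
    have hMt0 : 0 ≤ M * t := mul_nonneg hM0 ht.1
    have hMtM : M * t ≤ M := by nlinarith [ht.2]
    have hXb : |X t| ≤ 1 := by
      rw [abs_le]
      exact ⟨le_max_left _ _, max_le (by norm_num) (min_le_left _ _)⟩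
    have hYb : |Y t| ≤ 1 := by
      rw [abs_le]
      refine ⟨le_min (by norm_num) (le_min (by linarith) (by linarith)), min_le_left _ _⟩
    have hZb : |Z t| ≤ 1 := by
      rw [abs_le]
      refine ⟨le_min (by norm_num) (le_min (by linarith) (by linarith)), min_le_left _ _⟩
    have hball : ∀ i, |γ t i| ≤ 1 := by
      intro i
      fin_cases i
      · simpa [hγ] using hXb
      · simpa [hγ] using hYb
      · simpa [hγ] using hZb
    by_cases hcase1 : M * t ≤ s₀
    · have hXt : X t = 1 := by
        show max (-1) (min 1 (1 + s₀ - M * t)) = 1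
        rw [min_eq_left (by linarith), max_eq_right (by linarith)]
      refine norm_eq_one_of _ hball 0 ?_
      simp [hγ, hXt]
    · by_cases hcase2 : s₀ + 2 ≤ M * t
      · have hXt : X t = -1 := by
          show max (-1) (min 1 (1 + s₀ - M * t)) = -1
          rw [min_eq_right (by linarith), max_eq_left (by linarith)]
        refine norm_eq_one_of _ hball 0 ?_
        simp [hγ, hXt]
      · push_neg at hcase1 hcase2
        by_cases hY1 : 1 ≤ a + M * t
        · by_cases hY2 : 1 ≤ c + M - M * t
          · have hYt : Y t = 1 := by
              show min 1 (min (a + M * t) (c + M - M * t)) = 1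
              rw [min_eq_left (le_min hY1 hY2)]
            refine norm_eq_one_of _ hball 1 ?_
            simp [hγ, hYt]
          · push_neg at hY2
            have hbZ1 : 1 ≤ b + M * t := by
              by_contra hcon
              push_neg at hcon
              linarith
            have hbZ2 : 1 ≤ d + M - M * t := by
              by_contra hcon
              push_neg at hcon
              rcases le_total c d with hcd | hcd
              · have hmax : max c d = d := max_eq_right hcd
                linarith [hs₀m, h3]
              · have hmax : max c d = c := max_eq_left hcd
                linarith [hs₀m, h3]
            have hZt : Z t = 1 := by
              show min 1 (min (b + M * t) (d + M - M * t)) = 1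
              rw [min_eq_left (le_min hbZ1 hbZ2)]
            refine norm_eq_one_of _ hball 2 ?_
            simp [hγ, hZt]
        · push_neg at hY1
          have hbZ1 : 1 ≤ b + M * t := by
            by_contra hcon
            push_neg at hcon
            have : M * t < s₀ := lt_min (by linarith) (by linarith)
            linarith
          have hbZ2 : 1 ≤ d + M - M * t := by
            by_contra hcon
            push_neg at hcon
            linarith
          have hZt : Z t = 1 := by
            show min 1 (min (b + M * t) (d + M - M * t)) = 1
            rw [min_eq_left (le_min hbZ1 hbZ2)]
          refine norm_eq_one_of _ hball 2 ?_
          simp [hγ, hZt]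
  -- Lipschitz bound
  have habs1 : ∀ p q : ℝ, |max (-1 : ℝ) p - max (-1) q| ≤ |p - q| := by
    intro p q
    refine le_trans (abs_max_sub_max_le_max _ _ _ _) ?_
    rw [sub_self, abs_zero]
    exact max_le (abs_nonneg _) le_rfl
  have habs2 : ∀ x p q : ℝ, |min x p - min x q| ≤ |p - q| := by
    intro x p q
    refine le_trans (abs_min_sub_min_le_max _ _ _ _) ?_
    rw [sub_self, abs_zero]
    exact max_le (abs_nonneg _) le_rfl
  have hMabs : ∀ x y : ℝ, |M * x - M * y| = M * |x - y| := by
    intro x y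
    rw [show M * x - M * y = M * (x - y) by ring, abs_mul, abs_of_nonneg hM0]
  have hLip : LipschitzOnWith (Real.toNNReal M) γ (Icc 0 1) := by
    apply LipschitzOnWith.of_dist_le'
    intro x _ y _
    rw [dist_pi_le_iff (mul_nonneg hM0 dist_nonneg)]
    intro i
    have hX' : dist (X x) (X y) ≤ M * dist x y := by
      rw [Real.dist_eq, Real.dist_eq]
      refine le_trans (habs1 _ _) (le_trans (habs2 _ _ _) ?_)
      rw [show (1 + s₀ - M * x) - (1 + s₀ - M * y) = M * y - M * x by ring, hMabs,
        abs_sub_comm]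
    have hY' : dist (Y x) (Y y) ≤ M * dist x y := by
      rw [Real.dist_eq, Real.dist_eq]
      refine le_trans (habs2 _ _ _) (le_trans (abs_min_sub_min_le_max _ _ _ _) ?_)
      refine max_le ?_ ?_
      · rw [show (a + M * x) - (a + M * y) = M * x - M * y by ring, hMabs]
      · rw [show (c + M - M * x) - (c + M - M * y) = M * y - M * x by ring, hMabs,
          abs_sub_comm]
    have hZ' : dist (Z x) (Z y) ≤ M * dist x y := by
      rw [Real.dist_eq, Real.dist_eq]
      refine le_trans (habs2 _ _ _) (le_trans (abs_min_sub_min_le_max _ _ _ _) ?_)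
      refine max_le ?_ ?_
      · rw [show (b + M * x) - (b + M * y) = M * x - M * y by ring, hMabs]
      · rw [show (d + M - M * x) - (d + M - M * y) = M * y - M * x by ring, hMabs,
          abs_sub_comm]
    fin_cases i
    · simpa [hγ] using hX'
    · simpa [hγ] using hY'
    · simpa [hγ] using hZ'
  have hvar : eVariationOn γ (Icc 0 1) ≤ ENNReal.ofReal M := by
    have h1' : eVariationOn (γ ∘ id) (Icc 0 1) ≤
        (Real.toNNReal M : ℝ≥0∞) * eVariationOn (id : ℝ → ℝ) (Icc 0 1) :=
      hLip.comp_eVariationOn_le (mapsTo_id _)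
    rw [Function.comp_id] at h1'
    calc eVariationOn γ (Icc 0 1) ≤ (Real.toNNReal M : ℝ≥0∞) * eVariationOn (id : ℝ → ℝ) (Icc 0 1) := h1'
      _ ≤ (Real.toNNReal M : ℝ≥0∞) * 1 := mul_le_mul_right evar_id_le _
      _ = ENNReal.ofReal M := by rw [mul_one]; rfl
  refine le_trans ?_ hvar
  unfold geoDist
  refine iInf_le_of_le γ ?_
  refine iInf_le_of_le hγc.continuousOn ?_
  refine iInf_le_of_le hγ0 ?_
  refine iInf_le_of_le hγ1 ?_
  exact iInf_le _ hsph




lemma upper {a b c d : ℝ}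
    (ha : -1 ≤ a) (ha' : a ≤ 1) (hb : -1 ≤ b) (hb' : b ≤ 1)
    (hc : -1 ≤ c) (hc' : c ≤ 1) (hd : -1 ≤ d) (hd' : d ≤ 1) :
    geoDist ![1, a, b] ![-1, c, d] ≤
      ENNReal.ofReal (min (4-a-c) (min (4+a+c) (min (4-b-d) (min (4+b+d)
      (min (max (2-a-d) (4-b-c)) (min (max (2-a+d) (4+b-c))
      (min (max (2+a-d) (4-b+c)) (min (max (2+a+d) (4+b+c))
      (min (max (2-b-c) (4-a-d)) (min (max (2+b-c) (4-a+d))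
      (min (max (2-b+c) (4+a-d)) (max (2+b+c) (4+a+d))))))))))))) := by
  -- transformed template applications
  have tz : ∀ M : ℝ, 2 - a + d ≤ M → 2 + b - c ≤ M → 4 - max a (-b) - max c (-d) ≤ M →
      geoDist ![1, a, b] ![-1, c, d] ≤ ENNReal.ofReal M := by
    intro M m1 m2 m3
    have ht := template ha ha' (by linarith : (-1:ℝ) ≤ -b) (by linarith) hc hc'
      (by linarith : (-1:ℝ) ≤ -d) (by linarith) (by linarith : 2 - a - -d ≤ M)
      (by linarith : 2 - -b - c ≤ M) m3
    have hm := geoDist_le_map negz negz_cont negz_norm negz_edist ![1, a, -b] ![-1, c, -d]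
    rw [show negz ![1, a, -b] = ![1, a, b] by
        funext i; fin_cases i <;> simp [negz],
      show negz ![-1, c, -d] = ![-1, c, d] by
        funext i; fin_cases i <;> simp [negz]] at hm
    exact le_trans hm ht
  have ty : ∀ M : ℝ, 2 + a - d ≤ M → 2 - b + c ≤ M → 4 - max (-a) b - max (-c) d ≤ M →
      geoDist ![1, a, b] ![-1, c, d] ≤ ENNReal.ofReal M := by
    intro M m1 m2 m3
    have ht := template (by linarith : (-1:ℝ) ≤ -a) (by linarith) hb hb'
      (by linarith : (-1:ℝ) ≤ -c) (by linarith) hd hd' (by linarith : 2 - -a - d ≤ M)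
      (by linarith : 2 - b - -c ≤ M) m3
    have hm := geoDist_le_map negy negy_cont negy_norm negy_edist ![1, -a, b] ![-1, -c, d]
    rw [show negy ![1, -a, b] = ![1, a, b] by
        funext i; fin_cases i <;> simp [negy],
      show negy ![-1, -c, d] = ![-1, c, d] by
        funext i; fin_cases i <;> simp [negy]] at hm
    exact le_trans hm ht
  have tyz : ∀ M : ℝ, 2 + a + d ≤ M → 2 + b + c ≤ M → 4 - max (-a) (-b) - max (-c) (-d) ≤ M →
      geoDist ![1, a, b] ![-1, c, d] ≤ ENNReal.ofReal M := by
    intro M m1 m2 m3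
    have ht := template (by linarith : (-1:ℝ) ≤ -a) (by linarith) (by linarith : (-1:ℝ) ≤ -b)
      (by linarith) (by linarith : (-1:ℝ) ≤ -c) (by linarith) (by linarith : (-1:ℝ) ≤ -d)
      (by linarith) (by linarith : 2 - -a - -d ≤ M) (by linarith : 2 - -b - -c ≤ M) m3
    have hm := geoDist_le_map negyz negyz_cont negyz_norm negyz_edist ![1, -a, -b] ![-1, -c, -d]
    rw [show negyz ![1, -a, -b] = ![1, a, b] by
        funext i; fin_cases i <;> simp [negyz],
      show negyz ![-1, -c, -d] = ![-1, c, d] by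
        funext i; fin_cases i <;> simp [negyz]] at hm
    exact le_trans hm ht
  -- the twelve upper bounds
  have u1 : geoDist ![1, a, b] ![-1, c, d] ≤ ENNReal.ofReal (4-a-c) :=
    template ha ha' hb hb' hc hc' hd hd' (by linarith) (by linarith)
      (by linarith [le_max_left a b, le_max_left c d])
  have u3 : geoDist ![1, a, b] ![-1, c, d] ≤ ENNReal.ofReal (4-b-d) :=
    template ha ha' hb hb' hc hc' hd hd' (by linarith) (by linarith)
      (by linarith [le_max_right a b, le_max_right c d])
  have u5 : geoDist ![1, a, b] ![-1, c, d] ≤ ENNReal.ofReal (max (2-a-d) (4-b-c)) := by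
    refine template ha ha' hb hb' hc hc' hd hd' (le_max_left _ _)
      (by linarith [le_max_right (2-a-d) (4-b-c)]) ?_
    rcases max_cases a b with ⟨e1, f1⟩ | ⟨e1, f1⟩ <;> rcases max_cases c d with ⟨e2, f2⟩ | ⟨e2, f2⟩ <;>
      rw [e1, e2] <;> linarith [le_max_left (2-a-d) (4-b-c), le_max_right (2-a-d) (4-b-c)]
  have u9 : geoDist ![1, a, b] ![-1, c, d] ≤ ENNReal.ofReal (max (2-b-c) (4-a-d)) := by
    refine template ha ha' hb hb' hc hc' hd hd'
      (by linarith [le_max_right (2-b-c) (4-a-d)]) (le_max_left _ _) ?_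
    rcases max_cases a b with ⟨e1, f1⟩ | ⟨e1, f1⟩ <;> rcases max_cases c d with ⟨e2, f2⟩ | ⟨e2, f2⟩ <;>
      rw [e1, e2] <;> linarith [le_max_left (2-b-c) (4-a-d), le_max_right (2-b-c) (4-a-d)]
  have u4 : geoDist ![1, a, b] ![-1, c, d] ≤ ENNReal.ofReal (4+b+d) :=
    tz _ (by linarith) (by linarith) (by linarith [le_max_right a (-b), le_max_right c (-d)])
  have u6 : geoDist ![1, a, b] ![-1, c, d] ≤ ENNReal.ofReal (max (2-a+d) (4+b-c)) := by
    refine tz _ (le_max_left _ _) (by linarith [le_max_right (2-a+d) (4+b-c)]) ?_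
    rcases max_cases a (-b) with ⟨e1, f1⟩ | ⟨e1, f1⟩ <;>
      rcases max_cases c (-d) with ⟨e2, f2⟩ | ⟨e2, f2⟩ <;> rw [e1, e2] <;>
      linarith [le_max_left (2-a+d) (4+b-c), le_max_right (2-a+d) (4+b-c)]
  have u10 : geoDist ![1, a, b] ![-1, c, d] ≤ ENNReal.ofReal (max (2+b-c) (4-a+d)) := by
    refine tz _ (by linarith [le_max_right (2+b-c) (4-a+d)]) (le_max_left _ _) ?_
    rcases max_cases a (-b) with ⟨e1, f1⟩ | ⟨e1, f1⟩ <;>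
      rcases max_cases c (-d) with ⟨e2, f2⟩ | ⟨e2, f2⟩ <;> rw [e1, e2] <;>
      linarith [le_max_left (2+b-c) (4-a+d), le_max_right (2+b-c) (4-a+d)]
  have u7 : geoDist ![1, a, b] ![-1, c, d] ≤ ENNReal.ofReal (max (2+a-d) (4-b+c)) := by
    refine ty _ (le_max_left _ _) (by linarith [le_max_right (2+a-d) (4-b+c)]) ?_
    rcases max_cases (-a) b with ⟨e1, f1⟩ | ⟨e1, f1⟩ <;>
      rcases max_cases (-c) d with ⟨e2, f2⟩ | ⟨e2, f2⟩ <;> rw [e1, e2] <;>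
      linarith [le_max_left (2+a-d) (4-b+c), le_max_right (2+a-d) (4-b+c)]
  have u11 : geoDist ![1, a, b] ![-1, c, d] ≤ ENNReal.ofReal (max (2-b+c) (4+a-d)) := by
    refine ty _ (by linarith [le_max_right (2-b+c) (4+a-d)]) (le_max_left _ _) ?_
    rcases max_cases (-a) b with ⟨e1, f1⟩ | ⟨e1, f1⟩ <;>
      rcases max_cases (-c) d with ⟨e2, f2⟩ | ⟨e2, f2⟩ <;> rw [e1, e2] <;>
      linarith [le_max_left (2-b+c) (4+a-d), le_max_right (2-b+c) (4+a-d)]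
  have u2 : geoDist ![1, a, b] ![-1, c, d] ≤ ENNReal.ofReal (4+a+c) :=
    tyz _ (by linarith) (by linarith) (by linarith [le_max_left (-a) (-b), le_max_left (-c) (-d)])
  have u8 : geoDist ![1, a, b] ![-1, c, d] ≤ ENNReal.ofReal (max (2+a+d) (4+b+c)) := by
    refine tyz _ (le_max_left _ _) (by linarith [le_max_right (2+a+d) (4+b+c)]) ?_
    rcases max_cases (-a) (-b) with ⟨e1, f1⟩ | ⟨e1, f1⟩ <;>
      rcases max_cases (-c) (-d) with ⟨e2, f2⟩ | ⟨e2, f2⟩ <;> rw [e1, e2] <;>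
      linarith [le_max_left (2+a+d) (4+b+c), le_max_right (2+a+d) (4+b+c)]
  have u12 : geoDist ![1, a, b] ![-1, c, d] ≤ ENNReal.ofReal (max (2+b+c) (4+a+d)) := by
    refine tyz _ (by linarith [le_max_right (2+b+c) (4+a+d)]) (le_max_left _ _) ?_
    rcases max_cases (-a) (-b) with ⟨e1, f1⟩ | ⟨e1, f1⟩ <;>
      rcases max_cases (-c) (-d) with ⟨e2, f2⟩ | ⟨e2, f2⟩ <;> rw [e1, e2] <;>
      linarith [le_max_left (2+b+c) (4+a+d), le_max_right (2+b+c) (4+a+d)]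
  -- combine
  have hmin : ∀ x y : ℝ, geoDist ![1, a, b] ![-1, c, d] ≤ ENNReal.ofReal x →
      geoDist ![1, a, b] ![-1, c, d] ≤ ENNReal.ofReal y →
      geoDist ![1, a, b] ![-1, c, d] ≤ ENNReal.ofReal (min x y) := by
    intro x y hx hy
    rcases min_choice x y with h | h <;> rw [h] <;> assumption
  exact hmin _ _ u1 (hmin _ _ u2 (hmin _ _ u3 (hmin _ _ u4 (hmin _ _ u5 (hmin _ _ u6
    (hmin _ _ u7 (hmin _ _ u8 (hmin _ _ u9 (hmin _ _ u10 (hmin _ _ u11 u12))))))))))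




lemma lower {a b c d : ℝ}
    (ha : -1 ≤ a) (ha' : a ≤ 1) (hb : -1 ≤ b) (hb' : b ≤ 1)
    (hc : -1 ≤ c) (hc' : c ≤ 1) (hd : -1 ≤ d) (hd' : d ≤ 1)
    {γ : ℝ → (Fin 3 → ℝ)} (hcont : ContinuousOn γ (Icc 0 1))
    (h0 : γ 0 = ![1, a, b]) (h1 : γ 1 = ![-1, c, d])
    (hsph : ∀ t ∈ Icc (0:ℝ) 1, ‖γ t‖ = 1) :
    ENNReal.ofReal (min (4-a-c) (min (4+a+c) (min (4-b-d) (min (4+b+d)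
      (min (max (2-a-d) (4-b-c)) (min (max (2-a+d) (4+b-c))
      (min (max (2+a-d) (4-b+c)) (min (max (2+a+d) (4+b+c))
      (min (max (2-b-c) (4-a-d)) (min (max (2+b-c) (4-a+d))
      (min (max (2-b+c) (4+a-d)) (max (2+b+c) (4+a+d))))))))))))) ≤
    eVariationOn γ (Icc 0 1) := by
  have hA0 : γ 0 0 = 1 := by rw [h0]; simp
  have hB0 : γ 1 0 = -1 := by rw [h1]; simp
  have hxcont : ContinuousOn (fun t => γ t 0) (Icc 0 1) :=
    (continuous_apply (0 : Fin 3)).comp_continuousOn hcont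
  -- last time at x = 1
  set S : Set ℝ := Icc 0 1 ∩ (fun t => γ t 0) ⁻¹' {1} with hS
  have hSclosed : IsClosed S := hxcont.preimage_isClosed_of_isClosed isClosed_Icc
    isClosed_singleton
  have hS0 : (0:ℝ) ∈ S := ⟨⟨le_refl 0, zero_le_one⟩, hA0⟩
  have hSbdd : BddAbove S := BddAbove.mono inter_subset_left bddAbove_Icc
  set t₀ : ℝ := sSup S with ht₀def
  have ht₀S : t₀ ∈ S := hSclosed.csSup_mem ⟨0, hS0⟩ hSbdd
  have ht₀I : t₀ ∈ Icc (0:ℝ) 1 := ht₀S.1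
  have hxt₀ : γ t₀ 0 = 1 := ht₀S.2
  -- first time (after t₀) at x = -1
  set S' : Set ℝ := Icc t₀ 1 ∩ (fun t => γ t 0) ⁻¹' {-1} with hS'
  have hsub' : Icc t₀ 1 ⊆ Icc 0 1 := Icc_subset_Icc ht₀I.1 le_rfl
  have hS'closed : IsClosed S' := (hxcont.mono hsub').preimage_isClosed_of_isClosed
    isClosed_Icc isClosed_singleton
  have hS'1 : (1:ℝ) ∈ S' := ⟨⟨ht₀I.2, le_refl 1⟩, hB0⟩
  have hS'bdd : BddBelow S' := BddBelow.mono inter_subset_left bddBelow_Icc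
  set t₁ : ℝ := sInf S' with ht₁def
  have ht₁S : t₁ ∈ S' := hS'closed.csInf_mem ⟨1, hS'1⟩ hS'bdd
  have ht₁I : t₁ ∈ Icc t₀ 1 := ht₁S.1
  have hxt₁ : γ t₁ 0 = -1 := ht₁S.2
  have htlt : t₀ < t₁ := by
    rcases eq_or_lt_of_le ht₁I.1 with h | h
    · exfalso; rw [← h] at hxt₁; rw [hxt₀] at hxt₁; norm_num at hxt₁
    · exact h
  have ht₀01 : t₀ ∈ Icc (0:ℝ) 1 := ht₀I
  have ht₁01 : t₁ ∈ Icc (0:ℝ) 1 := ⟨le_trans ht₀I.1 ht₁I.1, ht₁I.2⟩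
  -- interior of the middle: on the belt
  have hbelt : ∀ t, t₀ < t → t < t₁ →
      (γ t 1 = 1 ∨ γ t 1 = -1 ∨ γ t 2 = 1 ∨ γ t 2 = -1) := by
    intro t h₀ h₁'
    have htI : t ∈ Icc (0:ℝ) 1 := ⟨le_trans ht₀I.1 h₀.le, le_trans h₁'.le ht₁I.2⟩
    have hn := hsph t htI
    obtain ⟨i, hi⟩ := exists_norm_coord (γ t)
    rw [hn] at hi
    have habs : |γ t i| = 1 := hi.symm
    have hne0 : γ t 0 ≠ 1 := by
      intro hcongt
      have : t ∈ S := ⟨htI, hcongt⟩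
      exact absurd (le_csSup hSbdd this) (not_le.mpr h₀)
    have hne0' : γ t 0 ≠ -1 := by
      intro hcongt
      have : t ∈ S' := ⟨⟨h₀.le, htI.2⟩, hcongt⟩
      exact absurd (csInf_le hS'bdd this) (not_le.mpr h₁')
    fin_cases i
    · exfalso
      rcases abs_eq (by norm_num : (0:ℝ) ≤ 1) |>.mp habs with h | h
      · exact hne0 h
      · exact hne0' h
    · rcases abs_eq (by norm_num : (0:ℝ) ≤ 1) |>.mp habs with h | h
      · exact Or.inl h
      · exact Or.inr (Or.inl h)
    · rcases abs_eq (by norm_num : (0:ℝ) ≤ 1) |>.mp habs with h | h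
      · exact Or.inr (Or.inr (Or.inl h))
      · exact Or.inr (Or.inr (Or.inr h))
  -- the four strips
  set C0 : Set (Fin 3 → ℝ) := {w | w 1 = 1 ∧ |w 0| ≤ 1 ∧ |w 2| ≤ 1} with hC0def
  set C1 : Set (Fin 3 → ℝ) := {w | w 1 = -1 ∧ |w 0| ≤ 1 ∧ |w 2| ≤ 1} with hC1def
  set C2 : Set (Fin 3 → ℝ) := {w | w 2 = 1 ∧ |w 0| ≤ 1 ∧ |w 1| ≤ 1} with hC2def
  set C3 : Set (Fin 3 → ℝ) := {w | w 2 = -1 ∧ |w 0| ≤ 1 ∧ |w 1| ≤ 1} with hC3def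
  set CC : Fin 4 → Set (Fin 3 → ℝ) := ![C0, C1, C2, C3] with hCCdef
  have hCC : ∀ i, IsClosed (CC i) := by
    have l0 : IsClosed C0 := by
      rw [hC0def]
      exact (isClosed_eq (continuous_apply (1:Fin 3)) continuous_const).inter
        ((isClosed_le (continuous_apply (0:Fin 3)).abs continuous_const).inter
         (isClosed_le (continuous_apply (2:Fin 3)).abs continuous_const))
    have l1 : IsClosed C1 := by
      rw [hC1def]
      exact (isClosed_eq (continuous_apply (1:Fin 3)) continuous_const).inter
        ((isClosed_le (continuous_apply (0:Fin 3)).abs continuous_const).inter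
         (isClosed_le (continuous_apply (2:Fin 3)).abs continuous_const))
    have l2 : IsClosed C2 := by
      rw [hC2def]
      exact (isClosed_eq (continuous_apply (2:Fin 3)) continuous_const).inter
        ((isClosed_le (continuous_apply (0:Fin 3)).abs continuous_const).inter
         (isClosed_le (continuous_apply (1:Fin 3)).abs continuous_const))
    have l3 : IsClosed C3 := by
      rw [hC3def]
      exact (isClosed_eq (continuous_apply (2:Fin 3)) continuous_const).inter
        ((isClosed_le (continuous_apply (0:Fin 3)).abs continuous_const).inter
         (isClosed_le (continuous_apply (1:Fin 3)).abs continuous_const))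
    intro i
    fin_cases i
    · exact l0
    · exact l1
    · exact l2
    · exact l3
  have hmemIoo : ∀ t, t₀ < t → t < t₁ → ∃ i, γ t ∈ CC i := by
    intro t h₀ h₁'
    have htI : t ∈ Icc (0:ℝ) 1 := ⟨le_trans ht₀I.1 h₀.le, le_trans h₁'.le ht₁I.2⟩
    have hn := hsph t htI
    have a0 := abs_coord_le _ hn 0
    have a1 := abs_coord_le _ hn 1
    have a2 := abs_coord_le _ hn 2
    rcases hbelt t h₀ h₁' with h | h | h | h
    · exact ⟨0, h, a0, a2⟩
    · exact ⟨1, h, a0, a2⟩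
    · exact ⟨2, h, a0, a1⟩
    · exact ⟨3, h, a0, a1⟩
  have hcontmid : ContinuousOn γ (Icc t₀ t₁) :=
    hcont.mono (Icc_subset_Icc ht₀I.1 ht₁01.2)
  -- membership at the endpoints via pigeonhole
  have hvm : 0 < t₁ - t₀ := by linarith
  have hseqP : ∀ n : ℕ, t₀ + (t₁ - t₀) / (n + 2) ∈ Icc t₀ t₁ ∧
      t₀ < t₀ + (t₁ - t₀) / (n + 2) ∧ t₀ + (t₁ - t₀) / (n + 2) < t₁ := by
    intro n
    have h2 : (0:ℝ) < (n:ℝ) + 2 := by positivity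
    have h3 : 0 < (t₁ - t₀) / (n + 2) := by positivity
    have h4 : (t₁ - t₀) / (n + 2) < (t₁ - t₀) / 1 := by
      apply div_lt_div_of_pos_left hvm (by norm_num) (by linarith)
    rw [div_one] at h4
    exact ⟨⟨by linarith, by linarith⟩, by linarith, by linarith⟩
  have htendP : Tendsto (fun n : ℕ => t₀ + (t₁ - t₀) / (n + 2)) atTop (𝓝 t₀) := by
    have h1 : Tendsto (fun n : ℕ => (t₁ - t₀) / (n + 2)) atTop (𝓝 0) := by
      apply Tendsto.div_atTop tendsto_const_nhds
      exact tendsto_atTop_add_const_right atTop 2 tendsto_natCast_atTop_atTop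
    simpa using tendsto_const_nhds.add h1
  have hseqQ : ∀ n : ℕ, t₁ - (t₁ - t₀) / (n + 2) ∈ Icc t₀ t₁ ∧
      t₀ < t₁ - (t₁ - t₀) / (n + 2) ∧ t₁ - (t₁ - t₀) / (n + 2) < t₁ := by
    intro n
    have h2 : (0:ℝ) < (n:ℝ) + 2 := by positivity
    have h3 : 0 < (t₁ - t₀) / (n + 2) := by positivity
    have h4 : (t₁ - t₀) / (n + 2) < (t₁ - t₀) / 1 := by
      apply div_lt_div_of_pos_left hvm (by norm_num) (by linarith)
    rw [div_one] at h4
    exact ⟨⟨by linarith, by linarith⟩, by linarith, by linarith⟩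
  have htendQ : Tendsto (fun n : ℕ => t₁ - (t₁ - t₀) / (n + 2)) atTop (𝓝 t₁) := by
    have h1 : Tendsto (fun n : ℕ => (t₁ - t₀) / (n + 2)) atTop (𝓝 0) := by
      apply Tendsto.div_atTop tendsto_const_nhds
      exact tendsto_atTop_add_const_right atTop 2 tendsto_natCast_atTop_atTop
    simpa using tendsto_const_nhds.sub h1
  have ht₀mem : ∃ i, γ t₀ ∈ CC i := by
    obtain ⟨i, hi, -⟩ := pigeon hCC hcontmid (left_mem_Icc.mpr htlt.le)
      (fun n => (hseqP n).1) (fun n => hmemIoo _ (hseqP n).2.1 (hseqP n).2.2) htendP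
    exact ⟨i, hi⟩
  have ht₁mem : ∃ i, γ t₁ ∈ CC i := by
    obtain ⟨i, hi, -⟩ := pigeon hCC hcontmid (right_mem_Icc.mpr htlt.le)
      (fun n => (hseqQ n).1) (fun n => hmemIoo _ (hseqQ n).2.1 (hseqQ n).2.2) htendQ
    exact ⟨i, hi⟩
  have hmem : ∀ t ∈ Icc t₀ t₁, ∃ i, γ t ∈ CC i := by
    intro t ht
    rcases eq_or_lt_of_le ht.1 with h | h
    · rw [← h]; exact ht₀mem
    · rcases eq_or_lt_of_le ht.2 with h' | h'
      · rw [h']; exact ht₁mem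
      · exact hmemIoo t h h'
  -- the potential
  have hsph₀ := hsph t₀ ht₀01
  have hsph₁ := hsph t₁ ht₁01
  have hθ₀ := th_mem (abs_coord_le _ hsph₀ 1) (abs_coord_le _ hsph₀ 2)
  set θ₀ : ℝ := th (γ t₀ 1) (γ t₀ 2) with hθ₀def
  set Φ : (Fin 3 → ℝ) → ℝ :=
    fun w => max (1 - w 0) (dc (th (w 1) (w 2)) θ₀) with hΦdef
  have hLip : ∀ i, ∀ p ∈ CC i, ∀ q ∈ CC i, Φ q - Φ p ≤ dist p q := by
    intro i p hp q hq
    simp only [hΦdef]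
    fin_cases i
    · have hp' : p ∈ C0 := hp
      have hq' : q ∈ C0 := hq
      exact phi_lip hθ₀.1 hθ₀.2 hp'.2.1 (by rw [hp'.1]; norm_num) hp'.2.2
        hq'.2.1 (by rw [hq'.1]; norm_num) hq'.2.2 (Or.inl ⟨hp'.1, hq'.1⟩)
    · have hp' : p ∈ C1 := hp
      have hq' : q ∈ C1 := hq
      exact phi_lip hθ₀.1 hθ₀.2 hp'.2.1 (by rw [hp'.1]; norm_num) hp'.2.2
        hq'.2.1 (by rw [hq'.1]; norm_num) hq'.2.2 (Or.inr (Or.inl ⟨hp'.1, hq'.1⟩))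
    · have hp' : p ∈ C2 := hp
      have hq' : q ∈ C2 := hq
      exact phi_lip hθ₀.1 hθ₀.2 hp'.2.1 hp'.2.2 (by rw [hp'.1]; norm_num)
        hq'.2.1 hq'.2.2 (by rw [hq'.1]; norm_num) (Or.inr (Or.inr (Or.inl ⟨hp'.1, hq'.1⟩)))
    · have hp' : p ∈ C3 := hp
      have hq' : q ∈ C3 := hq
      exact phi_lip hθ₀.1 hθ₀.2 hp'.2.1 hp'.2.2 (by rw [hp'.1]; norm_num)
        hq'.2.1 hq'.2.2 (by rw [hq'.1]; norm_num) (Or.inr (Or.inr (Or.inr ⟨hp'.1, hq'.1⟩)))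
  have hchain := chain hCC htlt.le hcontmid hmem hLip
  have hΦt₀ : Φ (γ t₀) = 0 := by
    simp only [hΦdef]
    rw [hxt₀, ← hθ₀def, dc_self]
    norm_num
  have hΦt₁ : Φ (γ t₁) = max 2 (dc (th (γ t₁ 1) (γ t₁ 2)) θ₀) := by
    simp only [hΦdef]
    rw [hxt₁]
    norm_num
  rw [hΦt₀, sub_zero] at hchain
  -- the three pieces
  have e1 : edist (γ 0) (γ t₀) ≤ eVariationOn γ (Icc 0 t₀) :=
    eVariationOn.edist_le γ ⟨le_refl 0, ht₀I.1⟩ ⟨ht₀I.1, le_refl t₀⟩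
  have e3 : edist (γ t₁) (γ 1) ≤ eVariationOn γ (Icc t₁ 1) :=
    eVariationOn.edist_le γ ⟨le_refl t₁, ht₁01.2⟩ ⟨ht₁01.2, le_refl 1⟩
  have hsplit : eVariationOn γ (Icc 0 t₀) + eVariationOn γ (Icc t₀ t₁) +
      eVariationOn γ (Icc t₁ 1) = eVariationOn γ (Icc 0 1) := by
    rw [icc_split γ ht₀I.1 htlt.le, icc_split γ (le_trans ht₀I.1 htlt.le) ht₁01.2]
  -- real inequality via `key`
  obtain ⟨iP, hiP⟩ := ht₀mem
  obtain ⟨iQ, hiQ⟩ := ht₁mem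
  have hPdis : γ t₀ 1 = 1 ∨ γ t₀ 1 = -1 ∨ γ t₀ 2 = 1 ∨ γ t₀ 2 = -1 := by
    fin_cases iP
    · exact Or.inl (show γ t₀ ∈ C0 from hiP).1
    · exact Or.inr (Or.inl (show γ t₀ ∈ C1 from hiP).1)
    · exact Or.inr (Or.inr (Or.inl (show γ t₀ ∈ C2 from hiP).1))
    · exact Or.inr (Or.inr (Or.inr (show γ t₀ ∈ C3 from hiP).1))
  have hQdis : γ t₁ 1 = 1 ∨ γ t₁ 1 = -1 ∨ γ t₁ 2 = 1 ∨ γ t₁ 2 = -1 := by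
    fin_cases iQ
    · exact Or.inl (show γ t₁ ∈ C0 from hiQ).1
    · exact Or.inr (Or.inl (show γ t₁ ∈ C1 from hiQ).1)
    · exact Or.inr (Or.inr (Or.inl (show γ t₁ ∈ C2 from hiQ).1))
    · exact Or.inr (Or.inr (Or.inr (show γ t₁ ∈ C3 from hiQ).1))
  have hkey := key ha ha' hb hb' hc hc' hd hd'
    (abs_coord_le _ hsph₀ 1) (abs_coord_le _ hsph₀ 2)
    (abs_coord_le _ hsph₁ 1) (abs_coord_le _ hsph₁ 2) hPdis hQdis
  have hγ01 : γ 0 1 = a := by rw [h0]; simp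
  have hγ02 : γ 0 2 = b := by rw [h0]; simp
  have hγ11 : γ 1 1 = c := by rw [h1]; simp
  have hγ12 : γ 1 2 = d := by rw [h1]; simp
  have hdA : max |a - γ t₀ 1| |b - γ t₀ 2| ≤ dist (γ 0) (γ t₀) := by
    refine max_le ?_ ?_
    · rw [← hγ01, ← Real.dist_eq]; exact dist_le_pi_dist (γ 0) (γ t₀) 1
    · rw [← hγ02, ← Real.dist_eq]; exact dist_le_pi_dist (γ 0) (γ t₀) 2
  have hdB : max |γ t₁ 1 - c| |γ t₁ 2 - d| ≤ dist (γ t₁) (γ 1) := by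
    refine max_le ?_ ?_
    · rw [← hγ11, ← Real.dist_eq]; exact dist_le_pi_dist (γ t₁) (γ 1) 1
    · rw [← hγ12, ← Real.dist_eq]; exact dist_le_pi_dist (γ t₁) (γ 1) 2
  have hreal : min (4-a-c) (min (4+a+c) (min (4-b-d) (min (4+b+d)
      (min (max (2-a-d) (4-b-c)) (min (max (2-a+d) (4+b-c))
      (min (max (2+a-d) (4-b+c)) (min (max (2+a+d) (4+b+c))
      (min (max (2-b-c) (4-a-d)) (min (max (2+b-c) (4-a+d))
      (min (max (2-b+c) (4+a-d)) (max (2+b+c) (4+a+d)))))))))))) ≤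
      dist (γ 0) (γ t₀) + Φ (γ t₁) + dist (γ t₁) (γ 1) := by
    rw [hΦt₁]
    calc _ ≤ max |a - γ t₀ 1| |b - γ t₀ 2| +
          max 2 (dc (th (γ t₁ 1) (γ t₁ 2)) (th (γ t₀ 1) (γ t₀ 2))) +
          max |γ t₁ 1 - c| |γ t₁ 2 - d| := hkey
      _ ≤ _ := by rw [← hθ₀def]; exact add_le_add (add_le_add hdA (le_refl _)) hdB
  have hΦpos : 0 ≤ Φ (γ t₁) := by
    rw [hΦt₁]; exact le_trans (by norm_num) (le_max_left _ _)
  calc ENNReal.ofReal (min (4-a-c) (min (4+a+c) (min (4-b-d) (min (4+b+d)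
      (min (max (2-a-d) (4-b-c)) (min (max (2-a+d) (4+b-c))
      (min (max (2+a-d) (4-b+c)) (min (max (2+a+d) (4+b+c))
      (min (max (2-b-c) (4-a-d)) (min (max (2+b-c) (4-a+d))
      (min (max (2-b+c) (4+a-d)) (max (2+b+c) (4+a+d)))))))))))))
      ≤ ENNReal.ofReal (dist (γ 0) (γ t₀) + Φ (γ t₁) + dist (γ t₁) (γ 1)) :=
        ENNReal.ofReal_le_ofReal hreal
    _ = ENNReal.ofReal (dist (γ 0) (γ t₀)) + ENNReal.ofReal (Φ (γ t₁)) +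
        ENNReal.ofReal (dist (γ t₁) (γ 1)) := by
        rw [ENNReal.ofReal_add (by positivity) dist_nonneg,
          ENNReal.ofReal_add dist_nonneg hΦpos]
    _ = edist (γ 0) (γ t₀) + ENNReal.ofReal (Φ (γ t₁)) + edist (γ t₁) (γ 1) := by
        rw [edist_dist, edist_dist]
    _ ≤ eVariationOn γ (Icc 0 t₀) + eVariationOn γ (Icc t₀ t₁) +
        eVariationOn γ (Icc t₁ 1) := add_le_add (add_le_add e1 hchain) e3
    _ = eVariationOn γ (Icc 0 1) := hsplit


end Geo13

end Geo13Aux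

theorem statement13 (a b c d : ℝ)
    (ha : a ∈ Icc (-1:ℝ) 1) (hb : b ∈ Icc (-1:ℝ) 1)
    (hc : c ∈ Icc (-1:ℝ) 1) (hd : d ∈ Icc (-1:ℝ) 1)
    (s₁ s₂ s₃ s₄ s₅ s₆ s₇ s₈ s₉ s₁₀ s₁₁ s₁₂ : ℝ)
    (h₁ : s₁ = 4 - a - c) (h₂ : s₂ = 4 + a + c)
    (h₃ : s₃ = 4 - b - d) (h₄ : s₄ = 4 + b + d)
    (h₅ : s₅ = max (2 - a - d) (4 - b - c))
    (h₆ : s₆ = max (2 - a + d) (4 + b - c))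
    (h₇ : s₇ = max (2 + a - d) (4 - b + c))
    (h₈ : s₈ = max (2 + a + d) (4 + b + c))
    (h₉ : s₉ = max (2 - b - c) (4 - a - d))
    (h₁₀ : s₁₀ = max (2 + b - c) (4 - a + d))
    (h₁₁ : s₁₁ = max (2 - b + c) (4 + a - d))
    (h₁₂ : s₁₂ = max (2 + b + c) (4 + a + d)) :
    geoDist ![1, a, b] ![-1, c, d] =
      ENNReal.ofReal
        (min s₁ (min s₂ (min s₃ (min s₄ (min s₅ (min s₆ (min s₇ (min s₈
          (min s₉ (min s₁₀ (min s₁₁ s₁₂))))))))))) := by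
  subst h₁ h₂ h₃ h₄ h₅ h₆ h₇ h₈ h₉ h₁₀ h₁₁ h₁₂
  refine le_antisymm ?_ ?_
  · exact Geo13.upper ha.1 ha.2 hb.1 hb.2 hc.1 hc.2 hd.1 hd.2
  · unfold geoDist
    refine le_iInf fun γ => le_iInf fun hcont => le_iInf fun h0 =>
      le_iInf fun h1 => le_iInf fun hsph => ?_
    exact Geo13.lower ha.1 ha.2 hb.1 hb.2 hc.1 hc.2 hd.1 hd.2 hcont h0 h1 hsph
end

section
/- Let a, b, c, d ∈ [−1,1] and let s₁, …, s₁₂ be the twelve quantities s₁ = 4 − a − c; s₂ = 4 + a + c; s₃ = 4 − b − d; s₄ = 4 + b + d; s₅ = max{2 − a − d, 4 − b − c}; s₆ = max{2 − a + d, 4 + b − c}; s₇ = max{2 + a − d, 4 − b + c}; s₈ = max{2 + a + d, 4 + b + c}; s₉ = max{2 − b − c, 4 − a − d}; s₁₀ = max{2 + b − c, 4 − a + d}; s₁₁ = max{2 − b + c, 4 + a − d}; s₁₂ = max{2 + b + c, 4 + a + d}. Then s₁ = min{s₁, …, s₁₂} if and only if at least one of the following five conditions holds: (37) |b| ≤ a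 and |d| ≤ c; (38) c = −d = 1 and b ≥ −a; (39) c = d = 1 and b ≤ a; (40) a = −b = 1 and d ≥ −c; (41) a = b = 1 and d ≤ c. -/
theorem statement14 (a b c d : ℝ)
    (ha : a ∈ Set.Icc (-1:ℝ) 1) (hb : b ∈ Set.Icc (-1:ℝ) 1)
    (hc : c ∈ Set.Icc (-1:ℝ) 1) (hd : d ∈ Set.Icc (-1:ℝ) 1)
    (s₁ s₂ s₃ s₄ s₅ s₆ s₇ s₈ s₉ s₁₀ s₁₁ s₁₂ : ℝ)
    (h₁ : s₁ = 4 - a - c) (h₂ : s₂ = 4 + a + c)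
    (h₃ : s₃ = 4 - b - d) (h₄ : s₄ = 4 + b + d)
    (h₅ : s₅ = max (2 - a - d) (4 - b - c))
    (h₆ : s₆ = max (2 - a + d) (4 + b - c))
    (h₇ : s₇ = max (2 + a - d) (4 - b + c))
    (h₈ : s₈ = max (2 + a + d) (4 + b + c))
    (h₉ : s₉ = max (2 - b - c) (4 - a - d))
    (h₁₀ : s₁₀ = max (2 + b - c) (4 - a + d))
    (h₁₁ : s₁₁ = max (2 - b + c) (4 + a - d))
    (h₁₂ : s₁₂ = max (2 + b + c) (4 + a + d)) :
    s₁ = min s₁ (min s₂ (min s₃ (min s₄ (min s₅ (min s₆ (min s₇ (min s₈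
        (min s₉ (min s₁₀ (min s₁₁ s₁₂)))))))))) ↔
      ((|b| ≤ a ∧ |d| ≤ c) ∨
        (c = 1 ∧ d = -1 ∧ -a ≤ b) ∨
        (c = 1 ∧ d = 1 ∧ b ≤ a) ∨
        (a = 1 ∧ b = -1 ∧ -c ≤ d) ∨
        (a = 1 ∧ b = 1 ∧ d ≤ c)) := by
  obtain ⟨ha1, ha2⟩ := ha
  obtain ⟨hb1, hb2⟩ := hb
  obtain ⟨hc1, hc2⟩ := hc
  obtain ⟨hd1, hd2⟩ := hd
  subst h₁ h₂ h₃ h₄ h₅ h₆ h₇ h₈ h₉ h₁₀ h₁₁ h₁₂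
  rw [eq_comm, min_eq_left_iff]
  simp only [le_min_iff, le_max_iff, abs_le]
  constructor
  · rintro ⟨g2, g3, g4, g5, g6, g7, g8, g9, g10, g11⟩
    rcases g5 with g5 | g5
    · have hcc : c = 1 := by linarith
      have hdd : d = -1 := by linarith
      rcases g6 with g6 | g6
      · exact absurd g6 (by linarith)
      · exact Or.inr (Or.inl ⟨hcc, hdd, by linarith⟩)
    · rcases g6 with g6 | g6
      · have hcc : c = 1 := by linarith
        have hdd : d = 1 := by linarith
        exact Or.inr (Or.inr (Or.inl ⟨hcc, hdd, by linarith⟩))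
      · rcases g9 with g9 | g9
        · have haa : a = 1 := by linarith
          have hbb : b = -1 := by linarith
          rcases g10 with g10 | g10
          · exact absurd g10 (by linarith)
          · exact Or.inr (Or.inr (Or.inr (Or.inl ⟨haa, hbb, by linarith⟩)))
        · rcases g10 with g10 | g10
          · have haa : a = 1 := by linarith
            have hbb : b = 1 := by linarith
            exact Or.inr (Or.inr (Or.inr (Or.inr ⟨haa, hbb, by linarith⟩)))
          · exact Or.inl ⟨⟨by linarith, by linarith⟩, ⟨by linarith, by linarith⟩⟩
  · rintro (⟨⟨hbl, hbr⟩, hdl, hdr⟩ | ⟨hcc, hdd, hba⟩ | ⟨hcc, hdd, hba⟩ |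
        ⟨haa, hbb, hdc⟩ | ⟨haa, hbb, hdc⟩) <;>
      subst_vars <;>
      refine ⟨by linarith, by linarith, by linarith, ?_, ?_, ?_, ?_, ?_, ?_, ?_, ?_⟩ <;>
      first | (left; linarith) | (right; linarith)
end

section
/- Let a, b, c, d ∈ [−1,1] and let s₁, …, s₁₂ be the twelve quantities s₁ = 4 − a − c; s₂ = 4 + a + c; s₃ = 4 − b − d; s₄ = 4 + b + d; s₅ = max{2 − a − d, 4 − b − c}; s₆ = max{2 − a + d, 4 + b − c}; s₇ = max{2 + a − d, 4 − b + c}; s₈ = max{2 + a + d, 4 + b + c}; s₉ = max{2 − b − c, 4 − a − d}; s₁₀ = max{2 + b − c, 4 − a + d}; s₁₁ = max{2 − b + c, 4 + a − d}; s₁₂ = max{2 + b + c, 4 + a + d}. Then s₆ = min{s₁, …, s₁₂} if and only if at least one of the following five conditions holds: (42) a + b ≤ 0 and c + d ≥ 0 and |a + d| ≤ c − b and b + d ≤ a + c and b ≤ 0 and c ≥ 0; (43) b = −1 and c ≥ 0 and −c ≤ d ≤ 1 + a + c; (44) b = −1 and d ≥ 1 − a − c; (45) c = 1 and b ≤ 0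 and b + d − 1 ≤ a ≤ −b; (46) c = 1 and a ≤ −1 − b − d. -/
set_option maxHeartbeats 1000000


theorem statement15 (a b c d : ℝ)
    (ha : a ∈ Set.Icc (-1:ℝ) 1) (hb : b ∈ Set.Icc (-1:ℝ) 1)
    (hc : c ∈ Set.Icc (-1:ℝ) 1) (hd : d ∈ Set.Icc (-1:ℝ) 1)
    (s₁ s₂ s₃ s₄ s₅ s₆ s₇ s₈ s₉ s₁₀ s₁₁ s₁₂ : ℝ)
    (h₁ : s₁ = 4 - a - c) (h₂ : s₂ = 4 + a + c)
    (h₃ : s₃ = 4 - b - d) (h₄ : s₄ = 4 + b + d)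
    (h₅ : s₅ = max (2 - a - d) (4 - b - c))
    (h₆ : s₆ = max (2 - a + d) (4 + b - c))
    (h₇ : s₇ = max (2 + a - d) (4 - b + c))
    (h₈ : s₈ = max (2 + a + d) (4 + b + c))
    (h₉ : s₉ = max (2 - b - c) (4 - a - d))
    (h₁₀ : s₁₀ = max (2 + b - c) (4 - a + d))
    (h₁₁ : s₁₁ = max (2 - b + c) (4 + a - d))
    (h₁₂ : s₁₂ = max (2 + b + c) (4 + a + d)) :
    s₆ = min s₁ (min s₂ (min s₃ (min s₄ (min s₅ (min s₆ (min s₇ (min s₈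
        (min s₉ (min s₁₀ (min s₁₁ s₁₂)))))))))) ↔
      ((a + b ≤ 0 ∧ 0 ≤ c + d ∧ |a + d| ≤ c - b ∧ b + d ≤ a + c ∧ b ≤ 0 ∧ 0 ≤ c) ∨
        (b = -1 ∧ 0 ≤ c ∧ -c ≤ d ∧ d ≤ 1 + a + c) ∨
        (b = -1 ∧ 1 - a - c ≤ d) ∨
        (c = 1 ∧ b ≤ 0 ∧ b + d - 1 ≤ a ∧ a ≤ -b) ∨
        (c = 1 ∧ a ≤ -1 - b - d)) := by
  obtain ⟨ha1, ha2⟩ := ha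
  obtain ⟨hb1, hb2⟩ := hb
  obtain ⟨hc1, hc2⟩ := hc
  obtain ⟨hd1, hd2⟩ := hd
  subst h₁ h₂ h₃ h₄ h₅ h₆ h₇ h₈ h₉ h₁₀ h₁₁ h₁₂
  constructor
  · intro h
    have t1 : max (2 - a + d) (4 + b - c) ≤ 4 - a - c := h.le.trans (by simp only [min_le_iff, le_refl, true_or, or_true])
    have t4 : max (2 - a + d) (4 + b - c) ≤ 4 + b + d := h.le.trans (by simp only [min_le_iff, le_refl, true_or, or_true])
    have t5 : max (2 - a + d) (4 + b - c) ≤ max (2 - a - d) (4 - b - c) :=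
      h.le.trans (by simp only [min_le_iff, le_refl, true_or, or_true])
    have t8 : max (2 - a + d) (4 + b - c) ≤ max (2 + a + d) (4 + b + c) :=
      h.le.trans (by simp only [min_le_iff, le_refl, true_or, or_true])
    have t9 : max (2 - a + d) (4 + b - c) ≤ max (2 - b - c) (4 - a - d) :=
      h.le.trans (by simp only [min_le_iff, le_refl, true_or, or_true])
    have t11 : max (2 - a + d) (4 + b - c) ≤ max (2 - b + c) (4 + a - d) :=
      h.le.trans (by simp only [min_le_iff, le_refl, true_or, or_true])
    have t12 : max (2 - a + d) (4 + b - c) ≤ max (2 + b + c) (4 + a + d) :=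
      h.le.trans (by simp only [min_le_iff, le_refl, true_or, or_true])
    have F1 : a + b ≤ 0 := by have := (max_le_iff.mp t1).2; linarith
    have F2 : 0 ≤ c + d := by have := (max_le_iff.mp t4).2; linarith
    have D9 := (max_le_iff.mp t9).2
    rw [le_max_iff] at D9
    have D12 := (max_le_iff.mp t12).2
    rw [le_max_iff] at D12
    have D11 := (max_le_iff.mp t11).2
    rw [le_max_iff] at D11
    have D11b := (max_le_iff.mp t11).1
    rw [le_max_iff] at D11b
    have D5 := (max_le_iff.mp t5).2
    rw [le_max_iff] at D5
    have D8 := (max_le_iff.mp t8).2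
    rw [le_max_iff] at D8
    rcases eq_or_lt_of_le hb1 with hbe | hbl
    · -- b = -1
      rcases le_or_gt (1 - a - c) d with h44 | h43
      · exact Or.inr (Or.inr (Or.inl ⟨hbe.symm, h44⟩))
      · have hc0 : 0 ≤ c := by rcases D8 with h' | h' <;> linarith
        have hdle : d ≤ 1 + a + c := by rcases D11b with h' | h' <;> linarith
        exact Or.inr (Or.inl ⟨hbe.symm, hc0, by linarith, hdle⟩)
    · rcases eq_or_lt_of_le hc2 with hce | hcl
      · -- c = 1
        rcases le_or_gt a (-1 - b - d) with h46 | h45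
        · exact Or.inr (Or.inr (Or.inr (Or.inr ⟨hce, h46⟩)))
        · have hb0 : b ≤ 0 := by rcases D5 with h' | h' <;> linarith
          have hbda : b + d - 1 ≤ a := by rcases D11b with h' | h' <;> linarith
          exact Or.inr (Or.inr (Or.inr (Or.inl ⟨hce, hb0, hbda, by linarith⟩)))
      · -- -1 < b, c < 1
        have habs1 : a + d ≤ c - b := by rcases D9 with h' | h' <;> linarith
        have habs2 : -(c - b) ≤ a + d := by rcases D12 with h' | h' <;> linarith
        have hbd : b + d ≤ a + c := by
          rcases D11 with h' | h'
          · rcases D11b with h'' | h'' <;> linarith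
          · linarith
        have hb0 : b ≤ 0 := by rcases D5 with h' | h' <;> linarith
        have hc0 : 0 ≤ c := by rcases D8 with h' | h' <;> linarith
        exact Or.inl ⟨F1, F2, abs_le.mpr ⟨by linarith, by linarith⟩, hbd, hb0, hc0⟩
  · intro hcond
    have hmin : min (4 - a - c) (min (4 + a + c) (min (4 - b - d) (min (4 + b + d)
        (min (max (2 - a - d) (4 - b - c)) (min (max (2 - a + d) (4 + b - c))
        (min (max (2 + a - d) (4 - b + c)) (min (max (2 + a + d) (4 + b + c))
        (min (max (2 - b - c) (4 - a - d)) (min (max (2 + b - c) (4 - a + d))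
        (min (max (2 - b + c) (4 + a - d)) (max (2 + b + c) (4 + a + d)))))))))))) ≤
        max (2 - a + d) (4 + b - c) := by
      simp only [min_le_iff, le_refl, true_or, or_true]
    refine le_antisymm ?_ hmin
    rcases hcond with ⟨p1, p2, p3, p4, p5, p6⟩ | ⟨p1, p2, p3, p4⟩ | ⟨p1, p2⟩ |
      ⟨p1, p2, p3, p4⟩ | ⟨p1, p2⟩ <;>
    [ rw [abs_le] at p3; skip; skip; skip; skip ] <;>
    [ obtain ⟨p3a, p3b⟩ := p3; skip; skip; skip; skip ] <;>
    simp only [le_min_iff, max_le_iff] <;>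
    simp only [le_max_iff] <;>
    and_intros <;>
    first
      | linarith
      | (left; linarith)
      | (right; linarith)
end

section
/- Let a, b, c, d ∈ [−1,1]. The minimum over (y, z) ∈ [−1,1] × [−1,1] of the function g(y,z) = max{|y − a|, 1 + b} + max{2, 2 − y + z} + max{1 − c, |z − d|} equals max{2 − a + d, 4 + b − c}. -/
theorem statement16 (a b c d : ℝ)
    (ha : a ∈ Set.Icc (-1:ℝ) 1) (hb : b ∈ Set.Icc (-1:ℝ) 1)
    (hc : c ∈ Set.Icc (-1:ℝ) 1) (hd : d ∈ Set.Icc (-1:ℝ) 1) :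
    IsLeast
      ((fun p : ℝ × ℝ =>
          max |p.1 - a| (1 + b) + max 2 (2 - p.1 + p.2) + max (1 - c) |p.2 - d|) ''
        (Set.Icc (-1:ℝ) 1 ×ˢ Set.Icc (-1:ℝ) 1))
      (max (2 - a + d) (4 + b - c)) := by
  obtain ⟨ha1, ha2⟩ := ha
  obtain ⟨hb1, hb2⟩ := hb
  obtain ⟨hc1, hc2⟩ := hc
  obtain ⟨hd1, hd2⟩ := hd
  constructor
  · -- membership: explicit minimizers
    rcases le_or_gt d a with h1 | h1
    · -- d ≤ a : witness (a, d)
      refine ⟨(a, d), Set.mem_prod.mpr ⟨⟨ha1, ha2⟩, ⟨hd1, hd2⟩⟩, ?_⟩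
      show max |a - a| (1 + b) + max 2 (2 - a + d) + max (1 - c) |d - d| =
        max (2 - a + d) (4 + b - c)
      simp only [sub_self, abs_zero]
      rw [max_eq_right (by linarith : (0:ℝ) ≤ 1 + b),
        max_eq_left (by linarith : 2 - a + d ≤ 2),
        max_eq_left (by linarith : (0:ℝ) ≤ 1 - c),
        max_eq_right (by linarith : 2 - a + d ≤ 4 + b - c)]
      ring
    · rcases le_or_gt d (a + 1 + b) with h2 | h2
      · -- a < d ≤ a+1+b : witness (d, d)
        refine ⟨(d, d), Set.mem_prod.mpr ⟨⟨hd1, hd2⟩, ⟨hd1, hd2⟩⟩, ?_⟩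
        show max |d - a| (1 + b) + max 2 (2 - d + d) + max (1 - c) |d - d| =
          max (2 - a + d) (4 + b - c)
        rw [abs_of_pos (by linarith : (0:ℝ) < d - a),
          max_eq_right (by linarith : d - a ≤ 1 + b),
          show (2:ℝ) - d + d = 2 by ring, max_self, sub_self, abs_zero,
          max_eq_left (by linarith : (0:ℝ) ≤ 1 - c),
          max_eq_right (by linarith : 2 - a + d ≤ 4 + b - c)]
        ring
      · rcases le_or_gt d (a + 2 + b - c) with h3 | h3
        · -- a+1+b < d ≤ a+2+b-c : witness (a+1+b, a+1+b)
          have hy : a + 1 + b ∈ Set.Icc (-1:ℝ) 1 := ⟨by linarith, by linarith⟩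
          refine ⟨(a + 1 + b, a + 1 + b), Set.mem_prod.mpr ⟨hy, hy⟩, ?_⟩
          show max |a + 1 + b - a| (1 + b) + max 2 (2 - (a + 1 + b) + (a + 1 + b)) +
              max (1 - c) |a + 1 + b - d| = max (2 - a + d) (4 + b - c)
          rw [show a + 1 + b - a = 1 + b by ring,
            abs_of_nonneg (by linarith : (0:ℝ) ≤ 1 + b), max_self,
            show (2:ℝ) - (a + 1 + b) + (a + 1 + b) = 2 by ring, max_self,
            abs_of_neg (by linarith : a + 1 + b - d < 0),
            max_eq_left (by linarith : -(a + 1 + b - d) ≤ 1 - c),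
            max_eq_right (by linarith : 2 - a + d ≤ 4 + b - c)]
          ring
        · -- d > a+2+b-c : witness (a+1+b, d-1+c)
          have hy : a + 1 + b ∈ Set.Icc (-1:ℝ) 1 := ⟨by linarith, by linarith⟩
          have hz : d - 1 + c ∈ Set.Icc (-1:ℝ) 1 := ⟨by linarith, by linarith⟩
          refine ⟨(a + 1 + b, d - 1 + c), Set.mem_prod.mpr ⟨hy, hz⟩, ?_⟩
          show max |a + 1 + b - a| (1 + b) + max 2 (2 - (a + 1 + b) + (d - 1 + c)) +
              max (1 - c) |d - 1 + c - d| = max (2 - a + d) (4 + b - c)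
          rw [show a + 1 + b - a = 1 + b by ring,
            abs_of_nonneg (by linarith : (0:ℝ) ≤ 1 + b), max_self,
            max_eq_right (by linarith : (2:ℝ) ≤ 2 - (a + 1 + b) + (d - 1 + c)),
            show d - 1 + c - d = -(1 - c) by ring, abs_neg,
            abs_of_nonneg (by linarith : (0:ℝ) ≤ 1 - c), max_self,
            max_eq_left (by linarith : 4 + b - c ≤ 2 - a + d)]
          ring
  · -- lower bound
    rintro v ⟨⟨y, z⟩, hp, rfl⟩
    show max (2 - a + d) (4 + b - c) ≤
      max |y - a| (1 + b) + max 2 (2 - y + z) + max (1 - c) |z - d|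
    have A : y - a ≤ |y - a| := le_abs_self _
    have B : d - z ≤ |z - d| := by rw [abs_sub_comm]; exact le_abs_self _
    have m1 : |y - a| ≤ max |y - a| (1 + b) := le_max_left _ _
    have m1' : 1 + b ≤ max |y - a| (1 + b) := le_max_right _ _
    have m2 : 2 - y + z ≤ max 2 (2 - y + z) := le_max_right _ _
    have m2' : (2:ℝ) ≤ max 2 (2 - y + z) := le_max_left _ _
    have m3 : |z - d| ≤ max (1 - c) |z - d| := le_max_right _ _
    have m3' : 1 - c ≤ max (1 - c) |z - d| := le_max_left _ _
    exact max_le (by linarith) (by linarith)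
end

section
/- Let m be a positive integer. Then 1 + 2m + 2²·m(m−1) + ⋯ + 2^m·m! = ⌊m!·2^m·√e⌋; that is, the sum ∑_{k=0}^{m} 2^k · m!/(m−k)! equals the integer part of m!·2^m·√e, where e is Euler's number. -/
theorem statement17 (m : ℕ) (hm : 0 < m) :
    ((∑ k ∈ Finset.range (m + 1), 2 ^ k * m.descFactorial k : ℕ) : ℤ) =
      ⌊(m.factorial : ℝ) * 2 ^ m * Real.sqrt (Real.exp 1)⌋ := by
  have hsqrt : Real.sqrt (Real.exp 1) = Real.exp (1 / 2) := by
    rw [← Real.exp_half]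
  set f : ℕ → ℝ := fun n => (m.factorial : ℝ) * 2 ^ m * ((1 / 2 : ℝ) ^ n / n.factorial)
    with hf
  have hsum : Summable f := (Real.summable_pow_div_factorial (1 / 2)).mul_left _
  have hval : (m.factorial : ℝ) * 2 ^ m * Real.sqrt (Real.exp 1) = ∑' n, f n := by
    rw [hsqrt, Real.exp_eq_exp_ℝ, NormedSpace.exp_eq_tsum_div, tsum_mul_left]
  -- partial sum equals the natural number sum
  have hpart : ∑ i ∈ Finset.range (m + 1), f i =
      ((∑ k ∈ Finset.range (m + 1), 2 ^ k * m.descFactorial k : ℕ) : ℝ) := by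
    push_cast
    rw [← Finset.sum_range_reflect f (m + 1)]
    apply Finset.sum_congr rfl
    intro k hk
    have hk' : k ≤ m := Nat.lt_succ_iff.mp (Finset.mem_range.mp hk)
    have h1 : m + 1 - 1 - k = m - k := by omega
    rw [hf]
    simp only [h1]
    have hfac : ((m - k).factorial : ℝ) * (m.descFactorial k : ℝ) = m.factorial := by
      rw [← Nat.cast_mul, Nat.factorial_mul_descFactorial hk']
    have h2 : (2 : ℝ) ^ m = 2 ^ k * 2 ^ (m - k) := by
      rw [← pow_add]; congr 1; omega
    have hne : ((m - k).factorial : ℝ) ≠ 0 := Nat.cast_ne_zero.mpr (Nat.factorial_ne_zero _)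
    rw [← hfac, h2]
    field_simp
    rw [mul_assoc, ← mul_pow]; norm_num
  have htail : ∀ i : ℕ, f (i + (m + 1)) ≤ (1 / 2 : ℝ) ^ i * (1 / 4) := by
    intro i
    rw [hf]
    have h2 : (2 : ℝ) ^ m * (1 / 2 : ℝ) ^ (i + (m + 1)) = (1 / 2) ^ (i + 1) := by
      have hi : i + (m + 1) = (i + 1) + m := by omega
      have h3 : (2 : ℝ) ^ m * (1 / 2) ^ m = 1 := by rw [← mul_pow]; norm_num
      rw [hi, pow_add]
      calc (2 : ℝ) ^ m * ((1 / 2) ^ (i + 1) * (1 / 2) ^ m)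
          = (2 ^ m * (1 / 2) ^ m) * (1 / 2) ^ (i + 1) := by ring
        _ = (1 / 2) ^ (i + 1) := by rw [h3, one_mul]
    have hfle : (m.factorial : ℝ) / (i + (m + 1)).factorial ≤ 1 / (m + 1) := by
      rw [div_le_div_iff₀ (by positivity) (by positivity)]
      have : (m + 1).factorial ≤ (i + (m + 1)).factorial :=
        Nat.factorial_le (by omega)
      calc (m.factorial : ℝ) * (m + 1) = ((m + 1).factorial : ℝ) := by
            rw [Nat.factorial_succ]; push_cast; ring
        _ ≤ ((i + (m + 1)).factorial : ℝ) := by exact_mod_cast this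
        _ = 1 * ((i + (m + 1)).factorial : ℝ) := (one_mul _).symm
    have hm2 : (1 : ℝ) / (m + 1) ≤ 1 / 2 := by
      apply div_le_div_of_nonneg_left (by norm_num) (by norm_num)
      have : (1 : ℝ) ≤ m := by exact_mod_cast hm
      linarith
    calc (m.factorial : ℝ) * 2 ^ m * ((1 / 2 : ℝ) ^ (i + (m + 1)) / (i + (m + 1)).factorial)
        = ((m.factorial : ℝ) / (i + (m + 1)).factorial) * (2 ^ m * (1 / 2) ^ (i + (m + 1))) := by
          ring
      _ ≤ (1 / (m + 1)) * (1 / 2) ^ (i + 1) := by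
          rw [h2]
          apply mul_le_mul_of_nonneg_right hfle (by positivity)
      _ ≤ (1 / 2) * (1 / 2) ^ (i + 1) := mul_le_mul_of_nonneg_right hm2 (by positivity)
      _ = (1 / 2 : ℝ) ^ i * (1 / 4) := by ring
  have hsum' : Summable fun i => f (i + (m + 1)) := (summable_nat_add_iff (m + 1)).2 hsum
  have hgeo : Summable fun i : ℕ => (1 / 2 : ℝ) ^ i * (1 / 4) :=
    (summable_geometric_of_lt_one (by norm_num) (by norm_num)).mul_right _
  have htail_le : ∑' i, f (i + (m + 1)) ≤ 1 / 2 := by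
    calc ∑' i, f (i + (m + 1)) ≤ ∑' i : ℕ, (1 / 2 : ℝ) ^ i * (1 / 4) :=
          Summable.tsum_le_tsum htail hsum' hgeo
      _ = (1 - 1/2 : ℝ)⁻¹ * (1/4) := by
          rw [tsum_mul_right, tsum_geometric_of_lt_one (by norm_num) (by norm_num)]
      _ = 1 / 2 := by norm_num
  have htail_nonneg : 0 ≤ ∑' i, f (i + (m + 1)) := by
    apply tsum_nonneg
    intro i
    rw [hf]
    positivity
  have hsplit := Summable.sum_add_tsum_nat_add (m + 1) hsum
  symm
  rw [Int.floor_eq_iff]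
  constructor
  · rw [hval, ← hsplit, hpart]
    push_cast
    linarith
  · rw [hval, ← hsplit, hpart]
    push_cast
    linarith
end
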